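/- Let G ⊆ K⟨𝒜⟩ be a set of polynomials, each with leading coefficient 1 and of degree > 1, such that for every g ∈ G no leading monomial T(g′) with g′ ∈ G ∖ {g} is a submonomial of T(g). Then G is a Gröbner basis of the two-sided ideal generated by G (with respect to deglex) if and only if the S-polynomial f·R − L·g of every clear S-quadruplet (f, R; g, L) of G is reduced to zero by G. -/

import Mathlib

open scoped BigOperators

/-! ### Generic definitions over an arbitrary alphabet -/

section Generic

variable {α : Type*} {K : Type*} [Field K]

/-- The monomial (word) `w`, viewed as an element of the free associative algebra
`K⟨α⟩ = MonoidAlgebra K (FreeMonoid α)`. -/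
noncomputable def Mw (w : List α) : MonoidAlgebra K (FreeMonoid α) :=
  MonoidAlgebra.single (FreeMonoid.ofList w) 1

/-- Strict deglex order on words, induced by a strict order `r` on the letters. -/
def WLt (r : α → α → Prop) (u v : List α) : Prop :=
  u.length < v.length ∨ (u.length = v.length ∧ List.Lex r u v)

/-- Reflexive deglex order on words. -/
def WLe (r : α → α → Prop) (u v : List α) : Prop :=
  WLt r u v ∨ u = v

/-- `w` is the deglex-leading monomial of `f`. -/
def IsLM (r : α → α → Prop) (f : MonoidAlgebra K (FreeMonoid α)) (w : List α) : Prop :=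
  FreeMonoid.ofList w ∈ f.coeff.support ∧
    ∀ u ∈ f.coeff.support, u ≠ FreeMonoid.ofList w → WLt r (FreeMonoid.toList u) w

/-- `p` is a submonomial of `w`. -/
def Submono (p w : List α) : Prop := ∃ l r, w = l ++ p ++ r

/-- `f` is reduced to zero by the set `G`: `f = Σ λ_t · A_t · g_t · B_t` with
`T(A_t · g_t · B_t) ⪯ T(f)` for every `t` (and `f = 0` qualifies vacuously). -/
def Red0 (r : α → α → Prop) (G : Set (MonoidAlgebra K (FreeMonoid α)))
    (f : MonoidAlgebra K (FreeMonoid α)) : Prop :=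
  f = 0 ∨
    ∃ (N : ℕ) (lam : Fin N → K) (A B : Fin N → List α)
      (g : Fin N → MonoidAlgebra K (FreeMonoid α)) (w : List α),
      (∀ t, g t ∈ G) ∧
      f = ∑ t, lam t • (Mw (A t) * g t * Mw (B t)) ∧
      IsLM r f w ∧
      ∀ t u, IsLM r (Mw (A t) * g t * Mw (B t)) u → WLe r u w

/-- `(f, R; g, L)` is an S-quadruplet of `G`:  `f, g ∈ G`, `0 < |L| < |f|`,
`0 < |R| < |g|`, and `T(f)·R = L·T(g)`. -/
def IsSQuad (r : α → α → Prop) (G : Set (MonoidAlgebra K (FreeMonoid α)))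
    (f : MonoidAlgebra K (FreeMonoid α)) (R : List α)
    (g : MonoidAlgebra K (FreeMonoid α)) (L : List α) : Prop :=
  f ∈ G ∧ g ∈ G ∧
    ∃ tf tg, IsLM r f tf ∧ IsLM r g tg ∧
      0 < L.length ∧ L.length < tf.length ∧
      0 < R.length ∧ R.length < tg.length ∧
      tf ++ R = L ++ tg

/-- A clear S-quadruplet: the leader `T(f)·R`, with its first and last letters deleted,
has no leading monomial of an element of `G` as a submonomial. -/
def IsClearSQuad (r : α → α → Prop) (G : Set (MonoidAlgebra K (FreeMonoid α)))
    (f : MonoidAlgebra K (FreeMonoid α)) (R : List α)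
    (g : MonoidAlgebra K (FreeMonoid α)) (L : List α) : Prop :=
  IsSQuad r G f R g L ∧
    ∀ tf, IsLM r f tf → ∀ g' ∈ G, ∀ tg', IsLM r g' tg' →
      ¬ Submono tg' (((tf ++ R).drop 1).dropLast)

end Generic

/-! ### The quaternionic alphabet -/

/-- The alphabet `𝒜`: quaternionic letters `q l`, conjugate letters `qbar l` (`l < n`),
and the basis letters `i, j, k`. -/
inductive Letter (n : ℕ) where
  | q (l : Fin n)
  | qbar (l : Fin n)
  | i
  | j
  | k
deriving DecidableEq

namespace Letter

/-- Rank realizing the conjugate-alternating order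
`q 0 ≺ qbar 0 ≺ q 1 ≺ qbar 1 ≺ ⋯ ≺ i ≺ j ≺ k`. -/
def rank {n : ℕ} : Letter n → ℕ
  | q l => 2 * l.val
  | qbar l => 2 * l.val + 1
  | i => 2 * n
  | j => 2 * n + 1
  | k => 2 * n + 2

/-- The conjugate letter: `q l ↔ qbar l`; basis letters are fixed. -/
def conj {n : ℕ} : Letter n → Letter n
  | q l => qbar l
  | qbar l => q l
  | i => i
  | j => j
  | k => k

/-- Whether a letter is one of the basis letters `i, j, k` (the set `ℰ`). -/
def isE {n : ℕ} : Letter n → Bool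
  | i => true
  | j => true
  | k => true
  | _ => false

end Letter

/-- The conjugate-alternating strict order on letters. -/
def llt {n : ℕ} (a b : Letter n) : Prop := a.rank < b.rank

/-- The conjugate-alternating order on letters (reflexive version). -/
def lle {n : ℕ} (a b : Letter n) : Prop := a.rank ≤ b.rank

/-- The free associative algebra `K⟨𝒜⟩`. -/
abbrev FA (n : ℕ) (K : Type*) [Field K] := MonoidAlgebra K (FreeMonoid (Letter n))

/-- The bracket of a monomial: `[w] = w + w̄`, where conjugation is the anti-automorphism
sending `q l ↦ qbar l`, `qbar l ↦ q l` and `e ↦ -e` for basis letters `e`. -/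
noncomputable def br {n : ℕ} {K : Type*} [Field K] (w : List (Letter n)) : FA n K :=
  Mw w + ((-1 : K) ^ (w.filter (fun a => a.isE)).length : K) • Mw ((w.map Letter.conj).reverse)

/-! ### The defining ideal ℐ -/

/-- The generators of the defining ideal `ℐ`:
(1) the multiplication table of `i, j, k`;
(2) the conjugate-defining relations `2q̄ + q + iqi + jqj + kqk`;
(3) commutativity of the coordinate brackets `[q]`, `[iq]`, `[jq]`, `[kq]`
with every letter. -/
def Igens (n : ℕ) (K : Type*) [Field K] : Set (FA n K) :=
  {p | p = Mw [Letter.i, Letter.i] + 1 ∨ p = Mw [Letter.j, Letter.j] + 1 ∨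
       p = Mw [Letter.k, Letter.k] + 1 ∨
       p = Mw [Letter.i, Letter.j] - Mw [Letter.k] ∨
       p = Mw [Letter.j, Letter.i] + Mw [Letter.k] ∨
       p = Mw [Letter.i, Letter.k] + Mw [Letter.j] ∨
       p = Mw [Letter.k, Letter.i] - Mw [Letter.j] ∨
       p = Mw [Letter.k, Letter.j] + Mw [Letter.i] ∨
       p = Mw [Letter.j, Letter.k] - Mw [Letter.i]} ∪
  {p | ∃ l : Fin n,
       p = (2 : K) • Mw [Letter.qbar l] + Mw [Letter.q l]
           + Mw [Letter.i, Letter.q l, Letter.i]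
           + Mw [Letter.j, Letter.q l, Letter.j]
           + Mw [Letter.k, Letter.q l, Letter.k]} ∪
  {p | ∃ (a : Letter n) (l : Fin n),
       p = Mw [a] * br [Letter.q l] - br [Letter.q l] * Mw [a] ∨
       p = Mw [a] * br [Letter.i, Letter.q l] - br [Letter.i, Letter.q l] * Mw [a] ∨
       p = Mw [a] * br [Letter.j, Letter.q l] - br [Letter.j, Letter.q l] * Mw [a] ∨
       p = Mw [a] * br [Letter.k, Letter.q l] - br [Letter.k, Letter.q l] * Mw [a]}

/-- The defining ideal `ℐ` of the quaternionic polynomial algebra. -/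
noncomputable def Iideal (n : ℕ) (K : Type*) [Field K] : TwoSidedIdeal (FA n K) :=
  TwoSidedIdeal.span (Igens n K)

/-! ### The conjectured Gröbner basis BG (parametrized by a letter substitution σ) -/

/-- The monomial `w`, with the substitution `σ` applied letterwise. -/
noncomputable def Mσ {n : ℕ} {K : Type*} [Field K] (σ : Letter n → Letter n) (w : List (Letter n)) :
    FA n K := Mw (w.map σ)

/-- The bracket `[w]`, with the substitution `σ` applied letterwise before bracketing. -/
noncomputable def Brσ {n : ℕ} {K : Type*} [Field K] (σ : Letter n → Letter n) (w : List (Letter n)) :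
    FA n K := br (w.map σ)

/-- The family `BGm` (`m ≥ 5`), with substitution `σ` applied:
`3·[2·A·y·1] − [2·A·y·1]·3` where `A` is a nonempty non-decreasing word over `𝒬 ∪ 𝒬̄` with
`3 ⪯ A`, every letter of `A` is `≺ y`, and `y ∈ 𝒬 ∪ ℰ`. -/
def BGmSet (n : ℕ) (K : Type*) [Field K] (σ : Letter n → Letter n) : Set (FA n K) :=
  {p | ∃ (a b c : Fin n) (A : List (Letter n)) (y : Letter n),
        a < b ∧ b < c ∧ A ≠ [] ∧
        (∀ x ∈ A, ∃ l : Fin n, x = Letter.q l ∨ x = Letter.qbar l) ∧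
        List.Chain' lle (Letter.q c :: A) ∧
        ((∃ l : Fin n, y = Letter.q l) ∨ y.isE) ∧
        (∀ x ∈ A, llt x y) ∧
        p = Mσ σ [Letter.q c] * Brσ σ ([Letter.q b] ++ A ++ [y, Letter.q a])
            - Brσ σ ([Letter.q b] ++ A ++ [y, Letter.q a]) * Mσ σ [Letter.q c]}

/-- The set `BG` (with letter substitution `σ`; `BG` itself is `BGset n K id`).
Here `a ≺ b ≺ c ≺ d` in `Fin n` play the roles of the letters `1 ≺ 2 ≺ 3 ≺ 4` of `𝒬`,
and `e, e'` are basis letters. -/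
def BGset (n : ℕ) (K : Type*) [Field K] (σ : Letter n → Letter n) : Set (FA n K) :=
  -- BG2(a)
  {p | p = Mσ σ [Letter.i, Letter.i] + 1 ∨ p = Mσ σ [Letter.j, Letter.j] + 1 ∨
       p = Mσ σ [Letter.k, Letter.k] + 1 ∨
       p = Mσ σ [Letter.i, Letter.j] - Mσ σ [Letter.k] ∨
       p = Mσ σ [Letter.j, Letter.i] + Mσ σ [Letter.k] ∨
       p = Mσ σ [Letter.j, Letter.k] - Mσ σ [Letter.i] ∨
       p = Mσ σ [Letter.k, Letter.j] + Mσ σ [Letter.i] ∨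
       p = Mσ σ [Letter.k, Letter.i] - Mσ σ [Letter.j] ∨
       p = Mσ σ [Letter.i, Letter.k] + Mσ σ [Letter.j]} ∪
  -- BG2(b)
  {p | ∃ a : Fin n,
       p = Mσ σ [Letter.qbar a, Letter.q a] - Mσ σ [Letter.q a, Letter.qbar a]} ∪
  {p | ∃ a b : Fin n, a < b ∧
       (p = Brσ σ [Letter.q b] * Mσ σ [Letter.qbar a]
            - Mσ σ [Letter.qbar a] * Brσ σ [Letter.q b] ∨
        p = Brσ σ [Letter.q b] * Mσ σ [Letter.q a]
            - Mσ σ [Letter.q a] * Brσ σ [Letter.q b])} ∪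
  -- BG2(c)
  {p | ∃ a b : Fin n, a < b ∧
       p = Mσ σ [Letter.q b] * Brσ σ [Letter.q a] - Brσ σ [Letter.q a] * Mσ σ [Letter.q b]} ∪
  {p | ∃ (a : Fin n) (e : Letter n), e.isE ∧
       p = Mσ σ [e] * Brσ σ [Letter.q a] - Brσ σ [Letter.q a] * Mσ σ [e]} ∪
  -- BG3(a)
  {p | ∃ a : Fin n,
       p = Mσ σ [Letter.k, Letter.q a, Letter.k] + Mσ σ [Letter.j, Letter.q a, Letter.j]
           + Mσ σ [Letter.i, Letter.q a, Letter.i]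
           + (2 : K) • Mσ σ [Letter.qbar a] + Mσ σ [Letter.q a]} ∪
  -- BG3(b)
  {p | ∃ a b c : Fin n, a < b ∧ b < c ∧
       (p = Brσ σ [Letter.q c, Letter.q b] * Mσ σ [Letter.q a]
            - Mσ σ [Letter.q a] * Brσ σ [Letter.q c, Letter.q b] ∨
        p = Brσ σ [Letter.q c, Letter.q a] * Mσ σ [Letter.qbar b]
            - Mσ σ [Letter.qbar b] * Brσ σ [Letter.q c, Letter.q a] ∨
        p = Brσ σ [Letter.q c, Letter.q a] * Mσ σ [Letter.q b]
            - Mσ σ [Letter.q b] * Brσ σ [Letter.q c, Letter.q a])} ∪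
  {p | ∃ a b : Fin n, a < b ∧
       (p = Brσ σ [Letter.q b, Letter.q a] * Mσ σ [Letter.qbar a]
            - Mσ σ [Letter.qbar a] * Brσ σ [Letter.q b, Letter.q a] ∨
        p = Brσ σ [Letter.q b, Letter.q a] * Mσ σ [Letter.q a]
            - Mσ σ [Letter.q a] * Brσ σ [Letter.q b, Letter.q a])} ∪
  {p | ∃ (a b : Fin n) (e : Letter n), a < b ∧ e.isE ∧
       (p = Brσ σ [e, Letter.q b] * Mσ σ [Letter.q a]
            - Mσ σ [Letter.q a] * Brσ σ [e, Letter.q b] ∨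
        p = Brσ σ [e, Letter.q a] * Mσ σ [Letter.q b]
            - Mσ σ [Letter.q b] * Brσ σ [e, Letter.q a] ∨
        p = Brσ σ [e, Letter.q a] * Mσ σ [Letter.qbar b]
            - Mσ σ [Letter.qbar b] * Brσ σ [e, Letter.q a])} ∪
  {p | ∃ (a : Fin n) (e : Letter n), e.isE ∧
       (p = Brσ σ [e, Letter.q a] * Mσ σ [Letter.q a]
            - Mσ σ [Letter.q a] * Brσ σ [e, Letter.q a] ∨
        p = Brσ σ [e, Letter.q a] * Mσ σ [Letter.qbar a]
            - Mσ σ [Letter.qbar a] * Brσ σ [e, Letter.q a])} ∪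
  {p | ∃ a : Fin n,
       (p = Brσ σ [Letter.j, Letter.q a] * Mσ σ [Letter.i]
            - Mσ σ [Letter.i] * Brσ σ [Letter.j, Letter.q a] ∨
        p = Brσ σ [Letter.k, Letter.q a] * Mσ σ [Letter.i]
            - Mσ σ [Letter.i] * Brσ σ [Letter.k, Letter.q a] ∨
        p = Brσ σ [Letter.k, Letter.q a] * Mσ σ [Letter.j]
            - Mσ σ [Letter.j] * Brσ σ [Letter.k, Letter.q a])} ∪
  -- BG3(c)
  {p | ∃ a b : Fin n, a < b ∧
       p = Mσ σ [Letter.q b] * Brσ σ [Letter.q b, Letter.q a]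
           - Brσ σ [Letter.q b, Letter.q a] * Mσ σ [Letter.q b]} ∪
  -- BG4
  {p | ∃ a b c : Fin n, a < b ∧ b < c ∧
       p = Mσ σ [Letter.q c] * Brσ σ [Letter.q b, Letter.q c, Letter.q a]
           - Brσ σ [Letter.q b, Letter.q c, Letter.q a] * Mσ σ [Letter.q c]} ∪
  {p | ∃ a b c d : Fin n, a < b ∧ b < c ∧ c < d ∧
       p = Mσ σ [Letter.q c] * Brσ σ [Letter.q b, Letter.q d, Letter.q a]
           - Brσ σ [Letter.q b, Letter.q d, Letter.q a] * Mσ σ [Letter.q c]} ∪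
  {p | ∃ (a b c : Fin n) (e : Letter n), a < b ∧ b < c ∧ e.isE ∧
       p = Mσ σ [Letter.q c] * Brσ σ [Letter.q b, e, Letter.q a]
           - Brσ σ [Letter.q b, e, Letter.q a] * Mσ σ [Letter.q c]} ∪
  {p | ∃ (a b : Fin n) (e e' : Letter n), a < b ∧ e.isE ∧ e'.isE ∧ lle e' e ∧
       ¬(e' = Letter.k ∧ e = Letter.k) ∧
       p = Mσ σ [e'] * Brσ σ [Letter.q b, e, Letter.q a]
           - Brσ σ [Letter.q b, e, Letter.q a] * Mσ σ [e']} ∪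
  -- BGm, m ≥ 5
  BGmSet n K σ

/-- The conjectured Gröbner basis `BG`. -/
def BG (n : ℕ) (K : Type*) [Field K] : Set (FA n K) := BGset n K id

/-- The normal-form shape of Theorem "Normal form": `M` is a submonomial of a word
`A_1 p_1 f_1 ⋯ A_r p_r f_r A_{r+1} e_1 f_{r+1} ⋯ e_s f_{r+s} e_{s+1}` satisfying
conditions (i)–(v).  (Indices are 0-based: `A 0, …, A r`; `p 0, …, p (r-1)`;
`f 0, …, f (r+s-1)`; `e 0, …, e s`.) -/
def NormalShape (n : ℕ) (M : List (Letter n)) : Prop :=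
  ∃ (r s : ℕ) (A : ℕ → List (Letter n)) (p f e : ℕ → Letter n),
    (∀ t < r, ∃ l : Fin n, p t = Letter.q l) ∧
    (∀ t < r + s, ∃ l : Fin n, f t = Letter.q l) ∧
    (∀ t < s + 1, (e t).isE) ∧
    (∀ t1 < s + 1, ∀ t2 < s + 1, e t1 = Letter.k → e t2 = Letter.k → t1 = t2) ∧
    (∀ t < r + 1,
      (∀ x ∈ A t, ∃ l : Fin n, x = Letter.q l ∨ x = Letter.qbar l) ∧
      List.Chain' lle (A t)) ∧
    List.Chain' lle ((List.range r).map p ++ (List.range (s + 1)).map e) ∧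
    List.Chain' lle ((List.range (r + s)).map f) ∧
    List.Chain' lle
      ((List.range r).flatMap (fun t => A t ++ [p t]) ++ A r ++ (List.range (s + 1)).map e) ∧
    (∀ t < r, llt (f t) (p t) ∧ ∀ x ∈ A t, llt x (p t)) ∧
    Submono M
      ((List.range r).flatMap (fun t => A t ++ [p t, f t]) ++ A r
        ++ (List.range s).flatMap (fun t => [e t, f (r + t)]) ++ [e s])

/-- A conjugation substitution: for each `l`, either both `q l` and `qbar l` are fixed or
both are swapped; the basis letters are fixed. -/
def IsConjSub {n : ℕ} (σ : Letter n → Letter n) : Prop :=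
  (∀ l : Fin n,
    (σ (Letter.q l) = Letter.q l ∧ σ (Letter.qbar l) = Letter.qbar l) ∨
    (σ (Letter.q l) = Letter.qbar l ∧ σ (Letter.qbar l) = Letter.q l)) ∧
  σ Letter.i = Letter.i ∧ σ Letter.j = Letter.j ∧ σ Letter.k = Letter.k

/-- The decomposition property for `f·R` from Proposition "k-decomp equiv":
`f·R = Σ_i λ_i·L_i·g_i·R_i` with `T(L_i·g_i·R_i) ⪯ T(f)·R` for every `i`, and
`T(L_i·g_i·R_i) ≺ T(f)·R` whenever `L_i` is the empty monomial. -/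
def SDecomp {α : Type*} {K : Type*} [Field K] (r : α → α → Prop)
    (G : Set (MonoidAlgebra K (FreeMonoid α)))
    (f : MonoidAlgebra K (FreeMonoid α)) (R : List α) : Prop :=
  ∃ (N : ℕ) (lam : Fin N → K) (Li Ri : Fin N → List α)
    (gi : Fin N → MonoidAlgebra K (FreeMonoid α)),
    (∀ i, gi i ∈ G) ∧
    f * Mw R = ∑ i, lam i • (Mw (Li i) * gi i * Mw (Ri i)) ∧
    ∀ tf, IsLM r f tf →
      (∀ i u, IsLM r (Mw (Li i) * gi i * Mw (Ri i)) u → WLe r u (tf ++ R)) ∧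
      (∀ i, Li i = [] →
        ∀ u, IsLM r (Mw (Li i) * gi i * Mw (Ri i)) u → WLt r u (tf ++ R))

/-- `G` is a Gröbner basis (w.r.t. the deglex order induced by `r`) of the two-sided
ideal `J`: `G ⊆ J`, `G` generates `J`, and the leading monomial of every nonzero element
of `J` has the leading monomial of some element of `G` as a submonomial. -/
def IsGroebnerBasis {α : Type*} {K : Type*} [Field K] (r : α → α → Prop)
    (G : Set (MonoidAlgebra K (FreeMonoid α)))
    (J : TwoSidedIdeal (MonoidAlgebra K (FreeMonoid α))) : Prop :=
  (∀ g ∈ G, g ∈ J) ∧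
  TwoSidedIdeal.span G = J ∧
  ∀ h, h ∈ J → h ≠ 0 →
    ∃ th, IsLM r h th ∧ ∃ g ∈ G, ∃ tg, IsLM r g tg ∧ Submono tg th

/-! ### Stage 1: order infrastructure -/
namespace St18

variable {α : Type*} [LinearOrder α]

theorem lex_append_left {u v : List α} (X : List α) (h : List.Lex (· < ·) u v) :
    List.Lex (· < ·) (X ++ u) (X ++ v) := by
  induction X with
  | nil => exact h
  | cons a X ih => exact List.Lex.cons ih

theorem lex_append_right {u v : List α} (Y : List α) (hlen : u.length = v.length)
    (h : List.Lex (· < ·) u v) : List.Lex (· < ·) (u ++ Y) (v ++ Y) := by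
  induction h with
  | nil => simp at hlen
  | cons h ih => exact List.Lex.cons (ih (by simpa using hlen))
  | rel h => exact List.Lex.rel h

theorem length_eq_of_lex {u v : List α} (h : WLt (· < ·) u v) (h2 : ¬ u.length < v.length) :
    u.length = v.length := by
  rcases h with h | ⟨h, _⟩
  · exact absurd h h2
  · exact h

theorem wlt_append {u v : List α} (X Y : List α) (h : WLt (· < ·) u v) :
    WLt (· < ·) (X ++ u ++ Y) (X ++ v ++ Y) := by
  rcases h with h | ⟨h, hl⟩
  · left; simpa using h
  · right
    refine ⟨by simpa using h, ?_⟩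
    rw [List.append_assoc, List.append_assoc]
    exact lex_append_left X (lex_append_right Y h hl)

theorem wle_append {u v : List α} (X Y : List α) (h : WLe (· < ·) u v) :
    WLe (· < ·) (X ++ u ++ Y) (X ++ v ++ Y) := by
  rcases h with h | rfl
  · exact Or.inl (wlt_append X Y h)
  · exact Or.inr rfl

theorem wlt_trans {u v w : List α} (h1 : WLt (· < ·) u v) (h2 : WLt (· < ·) v w) :
    WLt (· < ·) u w := by
  rcases h1 with h1 | ⟨h1, hl1⟩ <;> rcases h2 with h2 | ⟨h2, hl2⟩
  · exact Or.inl (h1.trans h2)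
  · exact Or.inl (h2 ▸ h1)
  · exact Or.inl (h1 ▸ h2)
  · exact Or.inr ⟨h1.trans h2, List.lex_trans lt_trans hl1 hl2⟩

theorem wlt_irrefl (u : List α) : ¬ WLt (· < ·) u u := by
  rintro (h | ⟨-, h⟩)
  · exact lt_irrefl _ h
  · exact (List.Lex.asymm (· < ·)).asymm u u h h

theorem wle_refl (u : List α) : WLe (· < ·) u u := Or.inr rfl

theorem wle_trans {u v w : List α} (h1 : WLe (· < ·) u v) (h2 : WLe (· < ·) v w) :
    WLe (· < ·) u w := by
  rcases h1 with h1 | rfl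
  · rcases h2 with h2 | rfl
    · exact Or.inl (wlt_trans h1 h2)
    · exact Or.inl h1
  · exact h2

theorem wlt_of_wle_of_wlt {u v w : List α} (h1 : WLe (· < ·) u v) (h2 : WLt (· < ·) v w) :
    WLt (· < ·) u w := by
  rcases h1 with h1 | rfl
  · exact wlt_trans h1 h2
  · exact h2

theorem wlt_of_wlt_of_wle {u v w : List α} (h1 : WLt (· < ·) u v) (h2 : WLe (· < ·) v w) :
    WLt (· < ·) u w := by
  rcases h2 with h2 | rfl
  · exact wlt_trans h1 h2
  · exact h1

theorem wlt_trichot {u v : List α} (h : u ≠ v) : WLt (· < ·) u v ∨ WLt (· < ·) v u := by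
  rcases Nat.lt_trichotomy u.length v.length with hl | hl | hl
  · exact Or.inl (Or.inl hl)
  · rcases (if a : List.Lex (· < ·) u v then Or.inl a else if b : List.Lex (· < ·) v u then Or.inr (Or.inr b) else Or.inr (Or.inl ((List.Lex.trichotomous (· < ·)).trichotomous u v a b)) : List.Lex (· < ·) u v ∨ u = v ∨ List.Lex (· < ·) v u) with h1 | h1 | h1
    · exact Or.inl (Or.inr ⟨hl, h1⟩)
    · exact absurd h1 h
    · exact Or.inr (Or.inr ⟨hl.symm, h1⟩)
  · exact Or.inr (Or.inl hl)

theorem wle_total (u v : List α) : WLe (· < ·) u v ∨ WLe (· < ·) v u := by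
  by_cases h : u = v
  · exact Or.inl (Or.inr h)
  · rcases wlt_trichot h with h | h
    · exact Or.inl (Or.inl h)
    · exact Or.inr (Or.inl h)

end St18
/-! ### Stage 2: the valuation and leading monomials -/
namespace St18

variable {α : Type*} [LinearOrder α] [Fintype α]

/-- index of a letter -/
noncomputable def idx (a : α) : ℕ := (Finset.univ.filter (· < a)).card

theorem idx_lt_card (a : α) : idx a < Fintype.card α := by
  have h : (Finset.univ.filter (· < a)) ⊂ Finset.univ := by
    refine Finset.filter_ssubset.2 ⟨a, Finset.mem_univ a, lt_irrefl a⟩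
  have := Finset.card_lt_card h
  rwa [Finset.card_univ] at this

theorem idx_strictMono {a b : α} (h : a < b) : idx a < idx b := by
  apply Finset.card_lt_card
  constructor
  · intro x hx
    simp only [Finset.mem_filter, Finset.mem_univ, true_and] at hx ⊢
    exact hx.trans h
  · intro hsub
    have := hsub (by simp [h] : a ∈ Finset.univ.filter (· < b))
    simp at this

variable (α) in
/-- the base -/
noncomputable def bb : ℕ := Fintype.card α + 1

/-- valuation of a word, order-isomorphic to deglex -/
noncomputable def wval : List α → ℕ
  | [] => 0
  | a :: t => (idx a + 1) * (bb α) ^ t.length + wval t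

theorem one_le_bb : 1 ≤ bb α := Nat.succ_le_succ (Nat.zero_le _)

theorem wval_lt (w : List α) : wval w < (bb α) ^ w.length := by
  induction w with
  | nil => simp only [wval, List.length_nil, pow_zero]; exact Nat.one_pos
  | cons a t ih =>
    have hbb : bb α = Fintype.card α + 1 := rfl
    have h1 : idx a + 1 ≤ bb α - 1 := by
      have := idx_lt_card a
      omega
    calc wval (a :: t) = (idx a + 1) * (bb α) ^ t.length + wval t := rfl
      _ < (idx a + 1) * (bb α) ^ t.length + (bb α) ^ t.length := Nat.add_lt_add_left ih _
      _ = (idx a + 2) * (bb α) ^ t.length := by ring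
      _ ≤ (bb α) * (bb α) ^ t.length := by
          apply Nat.mul_le_mul_right
          have := idx_lt_card a
          simp only [bb] at *
          omega
      _ = (bb α) ^ (t.length + 1) := by ring
      _ = (bb α) ^ (a :: t).length := by simp

theorem le_wval (a : α) (t : List α) : (bb α) ^ t.length ≤ wval (a :: t) := by
  have : 1 * (bb α) ^ t.length ≤ (idx a + 1) * (bb α) ^ t.length :=
    Nat.mul_le_mul_right _ (by omega)
  simp only [wval]
  omega

theorem wval_lt_of_length_lt {u v : List α} (h : u.length < v.length) : wval u < wval v := by
  cases v with
  | nil => simp at h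
  | cons b t =>
    have h1 : wval u < (bb α) ^ u.length := wval_lt u
    have h2 : (bb α) ^ u.length ≤ (bb α) ^ t.length := by
      apply Nat.pow_le_pow_right one_le_bb
      simpa using Nat.lt_succ_iff.mp h
    exact lt_of_lt_of_le (lt_of_lt_of_le h1 h2) (le_wval b t)

theorem wval_lt_of_lex {u v : List α} (hlen : u.length = v.length)
    (h : List.Lex (· < ·) u v) : wval u < wval v := by
  induction h with
  | nil => simp at hlen
  | @cons a l₁ l₂ h ih =>
    have hl : l₁.length = l₂.length := by simpa using hlen
    simp only [wval, hl]
    have := ih hl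
    omega
  | @rel a l₁ b l₂ h =>
    have hl : l₁.length = l₂.length := by simpa using hlen
    have h1 : wval l₁ < (bb α) ^ l₁.length := wval_lt l₁
    have h2 : idx a + 1 < idx b + 1 := by simpa using idx_strictMono h
    simp only [wval, hl]
    have h3 : (idx a + 1 + 1) * (bb α) ^ l₂.length ≤ (idx b + 1) * (bb α) ^ l₂.length :=
      Nat.mul_le_mul_right _ (by omega)
    have h4 : (idx a + 1) * (bb α) ^ l₂.length + wval l₁
        < (idx a + 1 + 1) * (bb α) ^ l₂.length := by
      have : wval l₁ < (bb α) ^ l₂.length := hl ▸ h1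
      have e : (idx a + 1 + 1) * (bb α) ^ l₂.length
          = (idx a + 1) * (bb α) ^ l₂.length + (bb α) ^ l₂.length := by ring
      omega
    have h5 : wval l₂ ≥ 0 := Nat.zero_le _
    omega

theorem wval_mono {u v : List α} (h : WLt (· < ·) u v) : wval u < wval v := by
  rcases h with h | ⟨hlen, h⟩
  · exact wval_lt_of_length_lt h
  · exact wval_lt_of_lex hlen h

end St18
/-! ### Stage 3: leading monomials and sandwich lemmas -/
namespace St18

open MonoidAlgebra Finsupp

variable {α : Type*} [LinearOrder α] [Fintype α] {K : Type*} [Field K]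

theorem ofList_inj {u v : List α} (h : FreeMonoid.ofList u = FreeMonoid.ofList v) : u = v := by
  have := congrArg FreeMonoid.toList h
  simpa [FreeMonoid.toList_ofList] using this

theorem exists_isLM (f : MonoidAlgebra K (FreeMonoid α)) (hf : f ≠ 0) :
    ∃ w, IsLM (· < ·) f w := by
  have hs : f.coeff.support.Nonempty :=
    Finsupp.support_nonempty_iff.2 (fun h0 => hf (by rw [← MonoidAlgebra.ofCoeff_coeff f, h0, MonoidAlgebra.ofCoeff_zero]))
  obtain ⟨m, hm, hmax⟩ := f.coeff.support.exists_max_image (fun u => wval (FreeMonoid.toList u)) hs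
  refine ⟨FreeMonoid.toList m, by simpa [FreeMonoid.ofList_toList] using hm, ?_⟩
  intro u hu hne
  have hne' : FreeMonoid.toList u ≠ FreeMonoid.toList m := by
    intro h
    exact hne (by rw [← FreeMonoid.ofList_toList u, h, FreeMonoid.ofList_toList])
  rcases wlt_trichot hne' with h | h
  · exact h
  · exact absurd (hmax u hu) (not_le.2 (wval_mono h))

theorem isLM_unique {f : MonoidAlgebra K (FreeMonoid α)} {w w' : List α}
    (h1 : IsLM (· < ·) f w) (h2 : IsLM (· < ·) f w') : w = w' := by
  by_contra hne
  have hne1 : FreeMonoid.ofList w ≠ FreeMonoid.ofList w' := fun h => hne (ofList_inj h)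
  have l1 := h2.2 _ h1.1 hne1
  have l2 := h1.2 _ h2.1 (Ne.symm hne1)
  simp only [FreeMonoid.toList_ofList] at l1 l2
  exact absurd (wval_mono l1) (not_lt.2 (le_of_lt (wval_mono l2)))

theorem isLM_mem_wle {f : MonoidAlgebra K (FreeMonoid α)} {w : List α}
    (h : IsLM (· < ·) f w) {u : FreeMonoid α} (hu : u ∈ f.coeff.support) :
    WLe (· < ·) (FreeMonoid.toList u) w := by
  by_cases he : u = FreeMonoid.ofList w
  · exact Or.inr (by rw [he, FreeMonoid.toList_ofList])
  · exact Or.inl (h.2 u hu he)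

theorem isLM_of_bound {f : MonoidAlgebra K (FreeMonoid α)} {D : List α}
    (hD : f.coeff (FreeMonoid.ofList D) ≠ 0)
    (hb : ∀ u ∈ f.coeff.support, WLe (· < ·) (FreeMonoid.toList u) D) :
    IsLM (· < ·) f D := by
  refine ⟨Finsupp.mem_support_iff.2 hD, fun u hu hne => ?_⟩
  rcases hb u hu with h | h
  · exact h
  · exact absurd (by rw [← h, FreeMonoid.ofList_toList]) hne

theorem Mw_mul (u v : List α) :
    (Mw u * Mw v : MonoidAlgebra K (FreeMonoid α)) = Mw (u ++ v) := by
  simp [Mw, MonoidAlgebra.single_mul_single, FreeMonoid.ofList_append]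

theorem Mw_nil : (Mw ([] : List α) : MonoidAlgebra K (FreeMonoid α)) = 1 := rfl

theorem sandwich_def (A B : List α) (f : MonoidAlgebra K (FreeMonoid α)) :
    Mw A * f * Mw B =
      MonoidAlgebra.ofCoeff
        (Finsupp.mapDomain (fun m => FreeMonoid.ofList A * m * FreeMonoid.ofList B) f.coeff) := by
  induction f using MonoidAlgebra.induction_linear with
  | zero => simp
  | add f g hf hg => rw [mul_add, add_mul, hf, hg, MonoidAlgebra.coeff_add, Finsupp.mapDomain_add,
      MonoidAlgebra.ofCoeff_add]
  | single a b =>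
    rw [MonoidAlgebra.coeff_single, Finsupp.mapDomain_single, MonoidAlgebra.ofCoeff_single]
    show Mw A * MonoidAlgebra.single a b * Mw B = _
    rw [Mw, Mw, MonoidAlgebra.single_mul_single, MonoidAlgebra.single_mul_single,
      one_mul, mul_one]

theorem emb_inj (A B : List α) :
    Function.Injective (fun m => FreeMonoid.ofList A * m * FreeMonoid.ofList B :
      FreeMonoid α → FreeMonoid α) := by
  intro m1 m2 h
  have h2 := congrArg FreeMonoid.toList h
  simp only [FreeMonoid.toList_mul, FreeMonoid.toList_ofList] at h2
  have h3 := List.append_cancel_right h2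
  exact FreeMonoid.toList.injective (List.append_cancel_left h3)

theorem sandwich_apply (A B : List α) (f : MonoidAlgebra K (FreeMonoid α)) (u : FreeMonoid α) :
    (Mw A * f * Mw B : MonoidAlgebra K (FreeMonoid α)).coeff
      (FreeMonoid.ofList A * u * FreeMonoid.ofList B) = f.coeff u := by
  rw [sandwich_def]
  exact Finsupp.mapDomain_apply (emb_inj A B) f.coeff u

theorem ofList_sandwich (A w B : List α) :
    FreeMonoid.ofList (A ++ w ++ B) =
      FreeMonoid.ofList A * FreeMonoid.ofList w * FreeMonoid.ofList B := by
  simp [FreeMonoid.ofList_append, mul_assoc]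

theorem sandwich_support {A B : List α} {f : MonoidAlgebra K (FreeMonoid α)}
    {u : FreeMonoid α} (hu : u ∈ (Mw A * f * Mw B : MonoidAlgebra K (FreeMonoid α)).coeff.support) :
    ∃ u' ∈ f.coeff.support, u = FreeMonoid.ofList A * u' * FreeMonoid.ofList B := by
  classical
  rw [sandwich_def, MonoidAlgebra.coeff_ofCoeff, Finsupp.mapDomain_support_of_injective (emb_inj A B)] at hu
  obtain ⟨u', hu', rfl⟩ := Finset.mem_image.1 hu
  exact ⟨u', hu', rfl⟩

theorem isLM_sandwich {f : MonoidAlgebra K (FreeMonoid α)} {w : List α}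
    (h : IsLM (· < ·) f w) (A B : List α) :
    IsLM (· < ·) (Mw A * f * Mw B) (A ++ w ++ B) := by
  constructor
  · rw [Finsupp.mem_support_iff, ofList_sandwich, sandwich_apply]
    exact Finsupp.mem_support_iff.1 h.1
  · intro u hu hne
    obtain ⟨u', hu', rfl⟩ := sandwich_support hu
    have h1 : u' ≠ FreeMonoid.ofList w := by
      intro h'
      rw [h'] at hne
      exact hne (ofList_sandwich A w B).symm
    have h2 := h.2 u' hu' h1
    have h3 : FreeMonoid.toList (FreeMonoid.ofList A * u' * FreeMonoid.ofList B)
        = A ++ FreeMonoid.toList u' ++ B := by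
      simp [FreeMonoid.toList_mul, FreeMonoid.toList_ofList]
    rw [h3]
    exact wlt_append A B h2

theorem isLM_smul {f : MonoidAlgebra K (FreeMonoid α)} {w : List α} {c : K}
    (hc : c ≠ 0) (h : IsLM (· < ·) f w) : IsLM (· < ·) (c • f) w := by
  constructor
  · rw [Finsupp.mem_support_iff, MonoidAlgebra.coeff_smul_apply]
    exact smul_ne_zero hc (Finsupp.mem_support_iff.1 h.1)
  · intro u hu hne
    refine h.2 u ?_ hne
    rw [Finsupp.mem_support_iff] at hu ⊢
    intro h0
    exact hu (by rw [MonoidAlgebra.coeff_smul_apply, h0, smul_zero])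

end St18
/-! ### Stage 4: bounded spans -/
namespace St18

open MonoidAlgebra Finsupp

variable {α : Type*} [LinearOrder α] [Fintype α] {K : Type*} [Field K]
variable (G : Set (MonoidAlgebra K (FreeMonoid α)))

/-- sandwiches with leader `⪯ D` -/
def TermB (D : List α) : Set (MonoidAlgebra K (FreeMonoid α)) :=
  {x | ∃ A B g tg, g ∈ G ∧ IsLM (· < ·) g tg ∧ x = Mw A * g * Mw B ∧
    WLe (· < ·) (A ++ tg ++ B) D}

/-- sandwiches with leader `≺ D` -/
def TermLt (D : List α) : Set (MonoidAlgebra K (FreeMonoid α)) :=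
  {x | ∃ A B g tg, g ∈ G ∧ IsLM (· < ·) g tg ∧ x = Mw A * g * Mw B ∧
    WLt (· < ·) (A ++ tg ++ B) D}

noncomputable def SpanB (D : List α) : Submodule K (MonoidAlgebra K (FreeMonoid α)) :=
  Submodule.span K (TermB G D)

noncomputable def SpanLt (D : List α) : Submodule K (MonoidAlgebra K (FreeMonoid α)) :=
  Submodule.span K (TermLt G D)

variable {G}

theorem spanLt_le_spanB (D : List α) : SpanLt G D ≤ SpanB G D :=
  Submodule.span_mono (fun x ⟨A, B, g, tg, h1, h2, h3, h4⟩ => ⟨A, B, g, tg, h1, h2, h3, Or.inl h4⟩)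

theorem spanB_mono {D D' : List α} (h : WLe (· < ·) D D') : SpanB G D ≤ SpanB G D' :=
  Submodule.span_mono (fun x ⟨A, B, g, tg, h1, h2, h3, h4⟩ =>
    ⟨A, B, g, tg, h1, h2, h3, wle_trans h4 h⟩)

theorem spanLt_mono {D D' : List α} (h : WLe (· < ·) D D') : SpanLt G D ≤ SpanLt G D' :=
  Submodule.span_mono (fun x ⟨A, B, g, tg, h1, h2, h3, h4⟩ =>
    ⟨A, B, g, tg, h1, h2, h3, wlt_of_wlt_of_wle h4 h⟩)

theorem spanB_le_spanLt {D D' : List α} (h : WLt (· < ·) D D') : SpanB G D ≤ SpanLt G D' :=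
  Submodule.span_mono (fun x ⟨A, B, g, tg, h1, h2, h3, h4⟩ =>
    ⟨A, B, g, tg, h1, h2, h3, wlt_of_wle_of_wlt h4 h⟩)

theorem spanB_support {D : List α} {h : MonoidAlgebra K (FreeMonoid α)} (hh : h ∈ SpanB G D) :
    ∀ u ∈ h.coeff.support, WLe (· < ·) (FreeMonoid.toList u) D := by
  induction hh using Submodule.span_induction with
  | mem x hx =>
    obtain ⟨A, B, g, tg, hg, hlm, rfl, hb⟩ := hx
    intro u hu
    obtain ⟨u', hu', rfl⟩ := sandwich_support hu
    have h1 : WLe (· < ·) (FreeMonoid.toList u') tg := isLM_mem_wle hlm hu'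
    have h2 : FreeMonoid.toList (FreeMonoid.ofList A * u' * FreeMonoid.ofList B)
        = A ++ FreeMonoid.toList u' ++ B := by
      simp [FreeMonoid.toList_mul, FreeMonoid.toList_ofList]
    rw [h2]
    exact wle_trans (wle_append A B h1) hb
  | zero => simp
  | add x y hx hy ihx ihy =>
    intro u hu
    classical
    rw [MonoidAlgebra.coeff_add] at hu
    rcases Finset.mem_union.1 (Finsupp.support_add hu) with h | h
    · exact ihx u h
    · exact ihy u h
  | smul c x hx ihx =>
    intro u hu
    rw [MonoidAlgebra.coeff_smul] at hu
    exact ihx u (Finsupp.support_smul hu)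

theorem spanLt_support {D : List α} {h : MonoidAlgebra K (FreeMonoid α)} (hh : h ∈ SpanLt G D) :
    ∀ u ∈ h.coeff.support, WLt (· < ·) (FreeMonoid.toList u) D := by
  induction hh using Submodule.span_induction with
  | mem x hx =>
    obtain ⟨A, B, g, tg, hg, hlm, rfl, hb⟩ := hx
    intro u hu
    obtain ⟨u', hu', rfl⟩ := sandwich_support hu
    have h1 : WLe (· < ·) (FreeMonoid.toList u') tg := isLM_mem_wle hlm hu'
    have h2 : FreeMonoid.toList (FreeMonoid.ofList A * u' * FreeMonoid.ofList B)
        = A ++ FreeMonoid.toList u' ++ B := by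
      simp [FreeMonoid.toList_mul, FreeMonoid.toList_ofList]
    rw [h2]
    exact wlt_of_wle_of_wlt (wle_append A B h1) hb
  | zero => simp
  | add x y hx hy ihx ihy =>
    intro u hu
    classical
    rw [MonoidAlgebra.coeff_add] at hu
    rcases Finset.mem_union.1 (Finsupp.support_add hu) with h | h
    · exact ihx u h
    · exact ihy u h
  | smul c x hx ihx =>
    intro u hu
    rw [MonoidAlgebra.coeff_smul] at hu
    exact ihx u (Finsupp.support_smul hu)

theorem spanLt_coeff_zero {D : List α} {h : MonoidAlgebra K (FreeMonoid α)}
    (hh : h ∈ SpanLt G D) : h.coeff (FreeMonoid.ofList D) = 0 := by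
  by_contra h0
  have := spanLt_support hh _ (Finsupp.mem_support_iff.2 h0)
  rw [FreeMonoid.toList_ofList] at this
  exact wlt_irrefl D this

theorem mem_spanB_self {g : MonoidAlgebra K (FreeMonoid α)} {tg : List α}
    (hg : g ∈ G) (hlm : IsLM (· < ·) g tg) : g ∈ SpanB G tg := by
  apply Submodule.subset_span
  exact ⟨[], [], g, tg, hg, hlm, by rw [Mw_nil, one_mul, mul_one], by simp [wle_refl]⟩

theorem spanB_sandwich {D : List α} {h : MonoidAlgebra K (FreeMonoid α)}
    (hh : h ∈ SpanB G D) (P Q : List α) : Mw P * h * Mw Q ∈ SpanB G (P ++ D ++ Q) := by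
  induction hh using Submodule.span_induction with
  | mem x hx =>
    obtain ⟨A, B, g, tg, hg, hlm, rfl, hb⟩ := hx
    apply Submodule.subset_span
    refine ⟨P ++ A, B ++ Q, g, tg, hg, hlm, ?_, ?_⟩
    · rw [← Mw_mul, ← Mw_mul]
      noncomm_ring
    · have := wle_append P Q hb
      simpa [List.append_assoc] using this
  | zero => simp only [mul_zero, zero_mul]; exact Submodule.zero_mem _
  | add x y hx hy ihx ihy =>
    rw [mul_add, add_mul]
    exact Submodule.add_mem _ ihx ihy
  | smul c x hx ihx =>
    rw [mul_smul_comm, smul_mul_assoc]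
    exact Submodule.smul_mem _ _ ihx

theorem spanLt_sandwich {D : List α} {h : MonoidAlgebra K (FreeMonoid α)}
    (hh : h ∈ SpanLt G D) (P Q : List α) : Mw P * h * Mw Q ∈ SpanLt G (P ++ D ++ Q) := by
  induction hh using Submodule.span_induction with
  | mem x hx =>
    obtain ⟨A, B, g, tg, hg, hlm, rfl, hb⟩ := hx
    apply Submodule.subset_span
    refine ⟨P ++ A, B ++ Q, g, tg, hg, hlm, ?_, ?_⟩
    · rw [← Mw_mul, ← Mw_mul]
      noncomm_ring
    · have := wlt_append P Q hb
      simpa [List.append_assoc] using this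
  | zero => simp only [mul_zero, zero_mul]; exact Submodule.zero_mem _
  | add x y hx hy ihx ihy =>
    rw [mul_add, add_mul]
    exact Submodule.add_mem _ ihx ihy
  | smul c x hx ihx =>
    rw [mul_smul_comm, smul_mul_assoc]
    exact Submodule.smul_mem _ _ ihx

end St18
/-! ### Stage 5: ideal characterization and Red0 -/
namespace St18

open MonoidAlgebra Finsupp

variable {α : Type*} [LinearOrder α] [Fintype α] {K : Type*} [Field K]
variable {G : Set (MonoidAlgebra K (FreeMonoid α))}

theorem bdd_add {h₁ h₂ : MonoidAlgebra K (FreeMonoid α)}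
    (H1 : ∃ D, h₁ ∈ SpanB G D) (H2 : ∃ D, h₂ ∈ SpanB G D) : ∃ D, h₁ + h₂ ∈ SpanB G D := by
  obtain ⟨D₁, hD₁⟩ := H1
  obtain ⟨D₂, hD₂⟩ := H2
  rcases wle_total D₁ D₂ with h | h
  · exact ⟨D₂, Submodule.add_mem _ (spanB_mono h hD₁) hD₂⟩
  · exact ⟨D₁, Submodule.add_mem _ hD₁ (spanB_mono h hD₂)⟩

theorem bdd_mul_left (x : MonoidAlgebra K (FreeMonoid α)) {h : MonoidAlgebra K (FreeMonoid α)}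
    (H : ∃ D, h ∈ SpanB G D) : ∃ D, x * h ∈ SpanB G D := by
  induction x using MonoidAlgebra.induction_linear with
  | zero => exact ⟨[], by rw [zero_mul]; exact Submodule.zero_mem _⟩
  | add f g hf hg => rw [add_mul]; exact bdd_add hf hg
  | single a b =>
    obtain ⟨D, hD⟩ := H
    refine ⟨FreeMonoid.toList a ++ D ++ [], ?_⟩
    have h1 : (MonoidAlgebra.single a b : MonoidAlgebra K (FreeMonoid α)) * h
        = b • (Mw (FreeMonoid.toList a) * h * Mw ([] : List α)) := by
      rw [Mw_nil, mul_one]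
      show _ = b • ((MonoidAlgebra.single (FreeMonoid.ofList (FreeMonoid.toList a)) 1 :
        MonoidAlgebra K (FreeMonoid α)) * h)
      rw [FreeMonoid.ofList_toList, ← smul_mul_assoc, MonoidAlgebra.smul_single, smul_eq_mul, mul_one]
    rw [h1]
    exact Submodule.smul_mem _ _ (spanB_sandwich hD _ _)

theorem bdd_mul_right (x : MonoidAlgebra K (FreeMonoid α)) {h : MonoidAlgebra K (FreeMonoid α)}
    (H : ∃ D, h ∈ SpanB G D) : ∃ D, h * x ∈ SpanB G D := by
  induction x using MonoidAlgebra.induction_linear with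
  | zero => exact ⟨[], by rw [mul_zero]; exact Submodule.zero_mem _⟩
  | add f g hf hg => rw [mul_add]; exact bdd_add hf hg
  | single a b =>
    obtain ⟨D, hD⟩ := H
    refine ⟨[] ++ D ++ FreeMonoid.toList a, ?_⟩
    have h1 : h * (MonoidAlgebra.single a b : MonoidAlgebra K (FreeMonoid α))
        = b • (Mw ([] : List α) * h * Mw (FreeMonoid.toList a)) := by
      rw [Mw_nil, one_mul]
      show _ = b • (h * (MonoidAlgebra.single (FreeMonoid.ofList (FreeMonoid.toList a)) 1 :
        MonoidAlgebra K (FreeMonoid α)))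
      rw [FreeMonoid.ofList_toList, ← mul_smul_comm, MonoidAlgebra.smul_single, smul_eq_mul, mul_one]
    rw [h1]
    exact Submodule.smul_mem _ _ (spanB_sandwich hD _ _)

/-- membership in the two-sided ideal generated by `G` is equivalent to membership in
some bounded span. -/
theorem mem_span_iff_bdd
    (hmonic : ∀ g ∈ G, ∃ tg, IsLM (· < ·) g tg ∧ g.coeff (FreeMonoid.ofList tg) = 1)
    {h : MonoidAlgebra K (FreeMonoid α)} :
    h ∈ TwoSidedIdeal.span G ↔ ∃ D, h ∈ SpanB G D := by
  constructor
  · intro hh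
    let J' : TwoSidedIdeal (MonoidAlgebra K (FreeMonoid α)) :=
      TwoSidedIdeal.mk' {h | ∃ D, h ∈ SpanB G D}
        ⟨[], Submodule.zero_mem _⟩
        (fun hx hy => bdd_add hx hy)
        (fun ⟨D, hx⟩ => ⟨D, by simpa using Submodule.neg_mem _ hx⟩)
        (fun hy => bdd_mul_left _ hy)
        (fun hx => bdd_mul_right _ hx)
    have hGJ : G ⊆ J' := by
      intro g hg
      rw [SetLike.mem_coe, TwoSidedIdeal.mem_mk']
      obtain ⟨tg, hlm, -⟩ := hmonic g hg
      exact ⟨tg, mem_spanB_self hg hlm⟩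
    have := TwoSidedIdeal.mem_span_iff.1 hh J' hGJ
    rwa [TwoSidedIdeal.mem_mk'] at this
  · rintro ⟨D, hD⟩
    induction hD using Submodule.span_induction with
    | mem x hx =>
      obtain ⟨A, B, g, tg, hg, hlm, rfl, hb⟩ := hx
      rw [mul_assoc]
      exact TwoSidedIdeal.mul_mem_left _ _ _
        (TwoSidedIdeal.mul_mem_right _ _ _ (TwoSidedIdeal.subset_span hg))
    | zero => exact TwoSidedIdeal.zero_mem _
    | add x y hx hy ihx ihy => exact TwoSidedIdeal.add_mem _ ihx ihy
    | smul c x hx ihx =>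
      rw [Algebra.smul_def]
      exact TwoSidedIdeal.mul_mem_left _ _ _ ihx

/-- `Red0` is equivalent to a bounded-span condition. -/
theorem red0_iff_spanB
    (hmonic : ∀ g ∈ G, ∃ tg, IsLM (· < ·) g tg ∧ g.coeff (FreeMonoid.ofList tg) = 1)
    {h : MonoidAlgebra K (FreeMonoid α)} :
    Red0 (· < ·) G h ↔ (h = 0 ∨ ∃ w, IsLM (· < ·) h w ∧ h ∈ SpanB G w) := by
  constructor
  · rintro (rfl | ⟨N, lam, A, B, g, w, hg, heq, hLM, hbd⟩)
    · exact Or.inl rfl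
    · refine Or.inr ⟨w, hLM, ?_⟩
      rw [heq]
      apply Submodule.sum_mem
      intro t _
      apply Submodule.smul_mem
      apply Submodule.subset_span
      obtain ⟨tg, hlm, -⟩ := hmonic (g t) (hg t)
      refine ⟨A t, B t, g t, tg, hg t, hlm, rfl, ?_⟩
      exact hbd t _ (isLM_sandwich hlm (A t) (B t))
  · rintro (rfl | ⟨w, hLM, hmem⟩)
    · exact Or.inl rfl
    · right
      rw [SpanB, Submodule.mem_span_set'] at hmem
      obtain ⟨n, c, v, hsum⟩ := hmem
      choose A B g tg hg hlm heq hb using fun i => (v i).2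
      refine ⟨n, c, A, B, g, w, hg, ?_, hLM, ?_⟩
      · rw [← hsum]
        apply Finset.sum_congr rfl
        intro i _
        rw [← heq i]
      · intro t u hu
        have h1 : u = A t ++ tg t ++ B t := isLM_unique hu (isLM_sandwich (hlm t) (A t) (B t))
        rw [h1]
        exact hb t

end St18
/-! ### Stage 6: forward direction -/
namespace St18

open MonoidAlgebra Finsupp

variable {α : Type*} [LinearOrder α] [Fintype α] {K : Type*} [Field K]
variable {G : Set (MonoidAlgebra K (FreeMonoid α))}

theorem smul_mem_span {c : K} {x : MonoidAlgebra K (FreeMonoid α)}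
    (hx : x ∈ TwoSidedIdeal.span G) : c • x ∈ TwoSidedIdeal.span G := by
  rw [Algebra.smul_def]
  exact TwoSidedIdeal.mul_mem_left _ _ _ hx

theorem reduce_all
    (hmonic : ∀ g ∈ G, ∃ tg, IsLM (· < ·) g tg ∧ g.coeff (FreeMonoid.ofList tg) = 1)
    (hGB : ∀ h, h ∈ TwoSidedIdeal.span G → h ≠ 0 →
      ∃ th, IsLM (· < ·) h th ∧ ∃ g ∈ G, ∃ tg, IsLM (· < ·) g tg ∧ Submono tg th) :
    ∀ (n : ℕ) (h : MonoidAlgebra K (FreeMonoid α)), h ∈ TwoSidedIdeal.span G → h ≠ 0 →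
      ∀ w, IsLM (· < ·) h w → wval w ≤ n → h ∈ SpanB G w := by
  intro n
  induction n using Nat.strong_induction_on with
  | _ n IH =>
    intro h hmem hne w hw hn
    obtain ⟨th, hth, g, hg, tg', htg', hsub⟩ := hGB h hmem hne
    rw [isLM_unique hth hw] at hsub
    obtain ⟨tg, htg, hcoeff⟩ := hmonic g hg
    rw [isLM_unique htg' htg] at hsub
    obtain ⟨A, B, hAB⟩ := hsub
    set c : K := h.coeff (FreeMonoid.ofList w) with hc
    have hcne : c ≠ 0 := Finsupp.mem_support_iff.1 hw.1
    set x : MonoidAlgebra K (FreeMonoid α) := Mw A * g * Mw B with hx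
    have hxlm : IsLM (· < ·) x (A ++ tg ++ B) := isLM_sandwich htg A B
    have hxcoeff : x.coeff (FreeMonoid.ofList w) = 1 := by
      rw [hAB, ofList_sandwich, hx, sandwich_apply, hcoeff]
    have hxterm : x ∈ TermB G w := ⟨A, B, g, tg, hg, htg, rfl, Or.inr hAB.symm⟩
    have hxspanB : x ∈ SpanB G w := Submodule.subset_span hxterm
    have hxspan : x ∈ TwoSidedIdeal.span G := by
      rw [hx, mul_assoc]
      exact TwoSidedIdeal.mul_mem_left _ _ _
        (TwoSidedIdeal.mul_mem_right _ _ _ (TwoSidedIdeal.subset_span hg))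
    set h' := h - c • x with hh'
    by_cases h'0 : h' = 0
    · have : h = c • x := by
        have := sub_eq_zero.1 h'0
        exact this
      rw [this]
      exact Submodule.smul_mem _ _ hxspanB
    · have h'mem : h' ∈ TwoSidedIdeal.span G :=
        TwoSidedIdeal.sub_mem _ hmem (smul_mem_span hxspan)
      have h'coeffw : h'.coeff (FreeMonoid.ofList w) = 0 := by
        rw [hh', MonoidAlgebra.coeff_sub, Finsupp.sub_apply, MonoidAlgebra.coeff_smul_apply, hxcoeff, smul_eq_mul, mul_one, ← hc,
          sub_self]
      have h'supp : ∀ u ∈ h'.coeff.support, WLt (· < ·) (FreeMonoid.toList u) w := by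
        intro u hu
        have hune : u ≠ FreeMonoid.ofList w := by
          intro he
          rw [he] at hu
          exact (Finsupp.mem_support_iff.1 hu) h'coeffw
        have humem : u ∈ h.coeff.support ∨ u ∈ x.coeff.support := by
          by_contra hcon
          push_neg at hcon
          have h1 : h.coeff u = 0 := Finsupp.notMem_support_iff.1 hcon.1
          have h2 : x.coeff u = 0 := Finsupp.notMem_support_iff.1 hcon.2
          have : h'.coeff u = 0 := by rw [hh', MonoidAlgebra.coeff_sub, Finsupp.sub_apply,
            MonoidAlgebra.coeff_smul_apply, h1, h2,
            smul_zero, sub_self]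
          exact (Finsupp.mem_support_iff.1 hu) this
        have hle : WLe (· < ·) (FreeMonoid.toList u) w := by
          rcases humem with h1 | h1
          · exact isLM_mem_wle hw h1
          · have := isLM_mem_wle hxlm h1
            rwa [← hAB] at this
        rcases hle with h1 | h1
        · exact h1
        · exact absurd (by rw [← h1, FreeMonoid.ofList_toList]) hune
      obtain ⟨w', hw'⟩ := exists_isLM h' h'0
      have hw'lt : WLt (· < ·) w' w := by
        have := h'supp _ hw'.1
        rwa [FreeMonoid.toList_ofList] at this
      have h'span : h' ∈ SpanB G w' := by
        refine IH (wval w') ?_ h' h'mem h'0 w' hw' le_rfl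
        exact lt_of_lt_of_le (wval_mono hw'lt) hn
      have : h = h' + c • x := by simp [hh']
      rw [this]
      exact Submodule.add_mem _ (spanB_mono (Or.inl hw'lt) h'span) (Submodule.smul_mem _ _ hxspanB)

theorem forward_dir
    (hmonic : ∀ g ∈ G, ∃ tg, IsLM (· < ·) g tg ∧ g.coeff (FreeMonoid.ofList tg) = 1)
    (hGB : ∀ h, h ∈ TwoSidedIdeal.span G → h ≠ 0 →
      ∃ th, IsLM (· < ·) h th ∧ ∃ g ∈ G, ∃ tg, IsLM (· < ·) g tg ∧ Submono tg th)
    (f : MonoidAlgebra K (FreeMonoid α)) (R : List α)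
    (g : MonoidAlgebra K (FreeMonoid α)) (L : List α)
    (hf : f ∈ G) (hg : g ∈ G) :
    Red0 (· < ·) G (f * Mw R - Mw L * g) := by
  set h := f * Mw R - Mw L * g with hh
  have hmem : h ∈ TwoSidedIdeal.span G :=
    TwoSidedIdeal.sub_mem _
      (TwoSidedIdeal.mul_mem_right _ _ _ (TwoSidedIdeal.subset_span hf))
      (TwoSidedIdeal.mul_mem_left _ _ _ (TwoSidedIdeal.subset_span hg))
  rw [red0_iff_spanB hmonic]
  by_cases h0 : h = 0
  · exact Or.inl h0
  · obtain ⟨w, hw⟩ := exists_isLM h h0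
    exact Or.inr ⟨w, hw, reduce_all hmonic hGB (wval w) h hmem h0 w hw le_rfl⟩

end St18
/-! ### Stage 7: helpers for the resolution lemma -/
namespace St18

open MonoidAlgebra Finsupp

variable {α : Type*} [LinearOrder α] [Fintype α] {K : Type*} [Field K]
variable {G : Set (MonoidAlgebra K (FreeMonoid α))}

theorem append_surgery {a b c d : List α} (h : a ++ b = c ++ d) (hl : a.length ≤ c.length) :
    ∃ m, c = a ++ m ∧ b = m ++ d := by
  rcases List.append_eq_append_iff.1 h with ⟨m, h1, h2⟩ | ⟨m, h1, h2⟩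
  · exact ⟨m, h1, h2⟩
  · have hm : m = [] := by
      have := congrArg List.length h1
      simp only [List.length_append] at this
      have : m.length = 0 := by omega
      exact List.eq_nil_of_length_eq_zero this
    subst hm
    exact ⟨[], by simpa using h1.symm, by simpa using h2.symm⟩

theorem wlt_congr {u v u' v' : List α} (hu : u = u') (hv : v = v') (h : WLt (· < ·) u v) :
    WLt (· < ·) u' v' := hu ▸ hv ▸ h

theorem single_eq_smul_Mw (u : FreeMonoid α) (c : K) :
    (MonoidAlgebra.single u c : MonoidAlgebra K (FreeMonoid α))
      = c • Mw (FreeMonoid.toList u) := by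
  rw [Mw, FreeMonoid.ofList_toList, MonoidAlgebra.smul_single, smul_eq_mul, mul_one]

theorem finsupp_decomp (r : MonoidAlgebra K (FreeMonoid α)) :
    r = ∑ u ∈ r.coeff.support, MonoidAlgebra.single u (r.coeff u) := by
  conv_lhs => rw [← MonoidAlgebra.sum_coeff_single r]
  rfl

/-- a polynomial `r` with all monomials `≺ t`, sandwiched to the right of `g`, lies in the
strict bounded span. -/
theorem low_mid {g : MonoidAlgebra K (FreeMonoid α)} {tg : List α}
    (hg : g ∈ G) (hlm : IsLM (· < ·) g tg) {r : MonoidAlgebra K (FreeMonoid α)} {t : List α}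
    (hr : ∀ u ∈ r.coeff.support, WLt (· < ·) (FreeMonoid.toList u) t) (A M B D : List α)
    (hD : A ++ tg ++ M ++ t ++ B = D) :
    Mw A * g * Mw M * r * Mw B ∈ SpanLt G D := by
  have hrw : Mw A * g * Mw M * r * Mw B
      = ∑ u ∈ r.coeff.support, r.coeff u • (Mw A * g * Mw (M ++ FreeMonoid.toList u ++ B)) := by
    conv_lhs => rw [finsupp_decomp r]
    rw [Finset.mul_sum, Finset.sum_mul]
    apply Finset.sum_congr rfl
    intro u _
    rw [single_eq_smul_Mw, ← Mw_mul, ← Mw_mul]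
    simp only [smul_mul_assoc, mul_smul_comm]
    congr 1
    noncomm_ring
  rw [hrw]
  apply Submodule.sum_mem
  intro u hu
  apply Submodule.smul_mem
  apply Submodule.subset_span
  refine ⟨A, M ++ FreeMonoid.toList u ++ B, g, tg, hg, hlm, rfl, ?_⟩
  refine wlt_congr (u := (A ++ tg ++ M) ++ FreeMonoid.toList u ++ B)
    (v := (A ++ tg ++ M) ++ t ++ B) (by simp [List.append_assoc]) (by rw [← hD]) ?_
  exact wlt_append _ _ (hr u hu)

/-- a polynomial `r` with all monomials `≺ t`, sandwiched to the left of `g`. -/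
theorem low_mid' {g : MonoidAlgebra K (FreeMonoid α)} {tg : List α}
    (hg : g ∈ G) (hlm : IsLM (· < ·) g tg) {r : MonoidAlgebra K (FreeMonoid α)} {t : List α}
    (hr : ∀ u ∈ r.coeff.support, WLt (· < ·) (FreeMonoid.toList u) t) (A M B D : List α)
    (hD : A ++ t ++ M ++ tg ++ B = D) :
    Mw A * r * Mw M * g * Mw B ∈ SpanLt G D := by
  have hrw : Mw A * r * Mw M * g * Mw B
      = ∑ u ∈ r.coeff.support, r.coeff u • (Mw (A ++ FreeMonoid.toList u ++ M) * g * Mw B) := by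
    conv_lhs => rw [finsupp_decomp r]
    rw [Finset.mul_sum, Finset.sum_mul, Finset.sum_mul, Finset.sum_mul]
    apply Finset.sum_congr rfl
    intro u _
    rw [single_eq_smul_Mw, ← Mw_mul, ← Mw_mul]
    simp only [smul_mul_assoc, mul_smul_comm]
  rw [hrw]
  apply Submodule.sum_mem
  intro u hu
  apply Submodule.smul_mem
  apply Submodule.subset_span
  refine ⟨A ++ FreeMonoid.toList u ++ M, B, g, tg, hg, hlm, rfl, ?_⟩
  refine wlt_congr (u := A ++ FreeMonoid.toList u ++ (M ++ tg ++ B))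
    (v := A ++ t ++ (M ++ tg ++ B)) (by simp [List.append_assoc]) (by rw [← hD]; simp [List.append_assoc]) ?_
  exact wlt_append _ _ (hr u hu)

/-- all monomials of an S-polynomial are `≺` its leader. -/
theorem spoly_bound {g₁ g₂ : MonoidAlgebra K (FreeMonoid α)} {tg₁ tg₂ R L : List α}
    (hlm₁ : IsLM (· < ·) g₁ tg₁) (hlm₂ : IsLM (· < ·) g₂ tg₂)
    (hc₁ : g₁.coeff (FreeMonoid.ofList tg₁) = 1) (hc₂ : g₂.coeff (FreeMonoid.ofList tg₂) = 1)
    (hS : tg₁ ++ R = L ++ tg₂) :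
    ∀ u ∈ (g₁ * Mw R - Mw L * g₂).coeff.support, WLt (· < ·) (FreeMonoid.toList u) (tg₁ ++ R) := by
  have e₁ : g₁ * Mw R = Mw ([] : List α) * g₁ * Mw R := by rw [Mw_nil, one_mul]
  have e₂ : Mw L * g₂ = Mw L * g₂ * Mw ([] : List α) := by rw [Mw_nil, mul_one]
  have hcoeff : (g₁ * Mw R - Mw L * g₂ : MonoidAlgebra K (FreeMonoid α)).coeff
      (FreeMonoid.ofList (tg₁ ++ R)) = 0 := by
    rw [MonoidAlgebra.coeff_sub, Finsupp.sub_apply]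
    have c1 : (g₁ * Mw R : MonoidAlgebra K (FreeMonoid α)).coeff (FreeMonoid.ofList (tg₁ ++ R)) = 1 := by
      rw [e₁]
      have : FreeMonoid.ofList (tg₁ ++ R)
          = FreeMonoid.ofList ([] : List α) * FreeMonoid.ofList tg₁ * FreeMonoid.ofList R := by
        rw [← ofList_sandwich]; simp
      rw [this, sandwich_apply, hc₁]
    have c2 : (Mw L * g₂ : MonoidAlgebra K (FreeMonoid α)).coeff (FreeMonoid.ofList (tg₁ ++ R)) = 1 := by
      rw [e₂, hS]
      have : FreeMonoid.ofList (L ++ tg₂)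
          = FreeMonoid.ofList L * FreeMonoid.ofList tg₂ * FreeMonoid.ofList ([] : List α) := by
        rw [← ofList_sandwich]; simp
      rw [this, sandwich_apply, hc₂]
    rw [c1, c2, sub_self]
  intro u hu
  have hune : u ≠ FreeMonoid.ofList (tg₁ ++ R) := by
    intro he
    rw [he] at hu
    exact (Finsupp.mem_support_iff.1 hu) hcoeff
  have hle : WLe (· < ·) (FreeMonoid.toList u) (tg₁ ++ R) := by
    classical
    have := Finsupp.support_sub (f := (g₁ * Mw R).coeff) (g := (Mw L * g₂).coeff)
      (by rwa [MonoidAlgebra.coeff_sub] at hu)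
    rcases Finset.mem_union.1 this with h1 | h1
    · rw [e₁] at h1
      obtain ⟨u', hu', rfl⟩ := sandwich_support h1
      have h2 : FreeMonoid.toList (FreeMonoid.ofList ([] : List α) * u' * FreeMonoid.ofList R)
          = FreeMonoid.toList u' ++ R := by
        simp [FreeMonoid.toList_mul, FreeMonoid.toList_ofList]
      rw [h2]
      have := isLM_mem_wle hlm₁ hu'
      have h3 := wle_append ([] : List α) R this
      simpa using h3
    · rw [e₂] at h1
      obtain ⟨u', hu', rfl⟩ := sandwich_support h1
      have h2 : FreeMonoid.toList (FreeMonoid.ofList L * u' * FreeMonoid.ofList ([] : List α))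
          = L ++ FreeMonoid.toList u' := by
        simp [FreeMonoid.toList_mul, FreeMonoid.toList_ofList]
      rw [h2, hS]
      have := isLM_mem_wle hlm₂ hu'
      have h3 := wle_append L ([] : List α) this
      simpa using h3
  rcases hle with h1 | h1
  · exact h1
  · exact absurd (by rw [← h1, FreeMonoid.ofList_toList]) hune

end St18
/-! ### Stage 8: the resolution lemma -/
namespace St18

open MonoidAlgebra Finsupp

variable {α : Type*} [LinearOrder α] [Fintype α] {K : Type*} [Field K]
variable {G : Set (MonoidAlgebra K (FreeMonoid α))}

/-- monomials of `g - Mw tg` are `≺ tg` for monic `g` with leading monomial `tg`. -/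
theorem sub_lm_bound {g : MonoidAlgebra K (FreeMonoid α)} {tg : List α}
    (hlm : IsLM (· < ·) g tg) (hc : g.coeff (FreeMonoid.ofList tg) = 1) :
    ∀ u ∈ (g - Mw tg : MonoidAlgebra K (FreeMonoid α)).coeff.support,
      WLt (· < ·) (FreeMonoid.toList u) tg := by
  classical
  intro u hu
  have hcoeff : (g - Mw tg : MonoidAlgebra K (FreeMonoid α)).coeff (FreeMonoid.ofList tg) = 0 := by
    rw [MonoidAlgebra.coeff_sub, Finsupp.sub_apply, hc, Mw, MonoidAlgebra.coeff_single,
      Finsupp.single_apply]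
    simp
  have hune : u ≠ FreeMonoid.ofList tg := by
    intro he; rw [he] at hu; exact (Finsupp.mem_support_iff.1 hu) hcoeff
  have hmem : u ∈ g.coeff.support := by
    classical
    rcases Finset.mem_union.1 (Finsupp.support_sub (f := g.coeff) (g := (Mw tg).coeff) hu) with h | h
    · exact h
    · exfalso
      apply hune
      have := Finsupp.support_single_subset (a := FreeMonoid.ofList tg) (b := (1 : K)) h
      simpa using this
  exact hlm.2 u hmem hune

theorem res
    (hmonic : ∀ g ∈ G, ∃ tg, IsLM (· < ·) g tg ∧ g.coeff (FreeMonoid.ofList tg) = 1)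
    (hirr : ∀ g ∈ G, ∀ g' ∈ G, g' ≠ g → ∀ tg tg',
      IsLM (· < ·) g tg → IsLM (· < ·) g' tg' → ¬ Submono tg' tg)
    (hred : ∀ (f : MonoidAlgebra K (FreeMonoid α)) (R : List α)
        (g : MonoidAlgebra K (FreeMonoid α)) (L : List α),
      IsClearSQuad (· < ·) G f R g L → Red0 (· < ·) G (f * Mw R - Mw L * g)) :
    ∀ (s : ℕ) (D A₁ B₁ A₂ B₂ : List α) (g₁ g₂ : MonoidAlgebra K (FreeMonoid α))
      (tg₁ tg₂ : List α),
      g₁ ∈ G → g₂ ∈ G → IsLM (· < ·) g₁ tg₁ → IsLM (· < ·) g₂ tg₂ →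
      A₁ ++ tg₁ ++ B₁ = D → A₂ ++ tg₂ ++ B₂ = D →
      D.length - min A₁.length A₂.length - min B₁.length B₂.length ≤ s →
      Mw A₁ * g₁ * Mw B₁ - Mw A₂ * g₂ * Mw B₂ ∈ SpanLt G D := by
  intro s
  induction s using Nat.strong_induction_on with
  | _ s IH =>
  -- key claim, assuming the occurrence of `g₁` starts no later than that of `g₂`
  suffices key : ∀ (D A₁ B₁ A₂ B₂ : List α) (g₁ g₂ : MonoidAlgebra K (FreeMonoid α))
      (tg₁ tg₂ : List α),
      g₁ ∈ G → g₂ ∈ G → IsLM (· < ·) g₁ tg₁ → IsLM (· < ·) g₂ tg₂ →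
      A₁ ++ tg₁ ++ B₁ = D → A₂ ++ tg₂ ++ B₂ = D →
      D.length - min A₁.length A₂.length - min B₁.length B₂.length ≤ s →
      A₁.length ≤ A₂.length →
      Mw A₁ * g₁ * Mw B₁ - Mw A₂ * g₂ * Mw B₂ ∈ SpanLt G D by
    intro D A₁ B₁ A₂ B₂ g₁ g₂ tg₁ tg₂ hg₁ hg₂ hlm₁ hlm₂ hD₁ hD₂ hspan
    rcases le_total A₁.length A₂.length with hord | hord
    · exact key D A₁ B₁ A₂ B₂ g₁ g₂ tg₁ tg₂ hg₁ hg₂ hlm₁ hlm₂ hD₁ hD₂ hspan hord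
    · have h2 := key D A₂ B₂ A₁ B₁ g₂ g₁ tg₂ tg₁ hg₂ hg₁ hlm₂ hlm₁ hD₂ hD₁
        (by omega) hord
      have := Submodule.neg_mem _ h2
      simpa using this
  intro D A₁ B₁ A₂ B₂ g₁ g₂ tg₁ tg₂ hg₁ hg₂ hlm₁ hlm₂ hD₁ hD₂ hspan horder
  -- coefficients
  obtain ⟨t₁', hlm₁', hc₁⟩ := hmonic g₁ hg₁
  rw [isLM_unique hlm₁' hlm₁] at hc₁
  obtain ⟨t₂', hlm₂', hc₂⟩ := hmonic g₂ hg₂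
  rw [isLM_unique hlm₂' hlm₂] at hc₂
  -- length bookkeeping
  have hlenD₁ : A₁.length + tg₁.length + B₁.length = D.length := by
    have := congrArg List.length hD₁; simp at this; omega
  have hlenD₂ : A₂.length + tg₂.length + B₂.length = D.length := by
    have := congrArg List.length hD₂; simp at this; omega
  -- first surgery
  have heq : A₁ ++ (tg₁ ++ B₁) = A₂ ++ (tg₂ ++ B₂) := by
    rw [← List.append_assoc, ← List.append_assoc, hD₁, hD₂]
  obtain ⟨l, hA₂, hrest⟩ := append_surgery heq horder
  have hllen : A₁.length + l.length = A₂.length := by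
    have := congrArg List.length hA₂; simp at this; omega
  by_cases hdisj : tg₁.length ≤ l.length
  · -- disjoint occurrences
    obtain ⟨M, hlM, hB₁⟩ := append_surgery hrest hdisj
    have hA₂' : A₂ = A₁ ++ tg₁ ++ M := by rw [hA₂, hlM, List.append_assoc]
    have hDform : A₁ ++ tg₁ ++ M ++ tg₂ ++ B₂ = D := by
      rw [← hD₁, hB₁]
      simp [List.append_assoc]
    have hxy : Mw A₁ * g₁ * Mw B₁ - Mw A₂ * g₂ * Mw B₂
        = (Mw A₁ * g₁ * Mw M * (Mw tg₂ - g₂) * Mw B₂)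
          + (Mw A₁ * (g₁ - Mw tg₁) * Mw M * g₂ * Mw B₂) := by
      rw [hA₂', hB₁]
      simp only [← Mw_mul]
      noncomm_ring
    have hb2 : ∀ u ∈ (Mw tg₂ - g₂ : MonoidAlgebra K (FreeMonoid α)).coeff.support,
        WLt (· < ·) (FreeMonoid.toList u) tg₂ := by
      intro u hu
      apply sub_lm_bound hlm₂ hc₂
      rwa [← Finsupp.support_neg, ← MonoidAlgebra.coeff_neg, neg_sub] at hu
    rw [hxy]
    apply Submodule.add_mem
    · exact low_mid hg₁ hlm₁ hb2 A₁ M B₂ D hDform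
    · exact low_mid' hg₂ hlm₂ (sub_lm_bound hlm₁ hc₁) A₁ M B₂ D hDform
  · push_neg at hdisj
    by_cases hcont : A₂.length + tg₂.length ≤ A₁.length + tg₁.length
    · -- tg₂ contained in tg₁
      have hrest' : (l ++ tg₂) ++ B₂ = tg₁ ++ B₁ := by
        rw [List.append_assoc]; exact hrest.symm
      obtain ⟨m, htg₁, hB₂⟩ := append_surgery hrest' (by simp; omega)
      have hsub : Submono tg₂ tg₁ := ⟨l, m, by rw [htg₁, List.append_assoc]⟩
      by_cases hgeq : g₂ = g₁
      · subst hgeq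
        have hteq : tg₂ = tg₁ := isLM_unique hlm₂ hlm₁
        have hlen : tg₁.length = l.length + tg₂.length + m.length := by
          have := congrArg List.length htg₁; simp at this; omega
        have hteql : tg₂.length = tg₁.length := by rw [hteq]
        have hl0 : l = [] := by
          apply List.eq_nil_of_length_eq_zero; omega
        have hm0 : m = [] := by
          apply List.eq_nil_of_length_eq_zero; omega
        subst hl0
        have hAA : A₂ = A₁ := by simpa using hA₂
        have hBB : B₂ = B₁ := by simpa [hm0] using hB₂
        rw [hAA, hBB, sub_self]
        exact Submodule.zero_mem _
      · exact absurd hsub (hirr g₁ hg₁ g₂ hg₂ hgeq tg₁ tg₂ hlm₁ hlm₂)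
    · -- proper overlap
      push_neg at hcont
      have hl0 : 0 < l.length := by
        rcases Nat.eq_zero_or_pos l.length with h0 | h0
        · exfalso
          have hle : l = [] := List.eq_nil_of_length_eq_zero h0
          subst hle
          have hrest'' : tg₁ ++ B₁ = tg₂ ++ B₂ := by simpa using hrest
          obtain ⟨m, htg₂, hB₁⟩ := append_surgery hrest'' (by omega)
          have hsub : Submono tg₁ tg₂ := ⟨[], m, by simpa using htg₂⟩
          by_cases hgeq : g₁ = g₂
          · subst hgeq
            have hteq : tg₁ = tg₂ := isLM_unique hlm₁ hlm₂
            have e1 : tg₁.length = tg₂.length := by rw [hteq]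
            have e2 := congrArg List.length htg₂
            simp at e2
            omega
          · exact absurd hsub (hirr g₂ hg₂ g₁ hg₁ hgeq tg₂ tg₁ hlm₂ hlm₁)
        · exact h0
      have hrest' : tg₁ ++ B₁ = (l ++ tg₂) ++ B₂ := by
        rw [List.append_assoc]; exact hrest
      obtain ⟨R, hLR, hB₁⟩ := append_surgery hrest' (by simp; omega)
      have hRlen : tg₁.length + R.length = l.length + tg₂.length := by
        have := congrArg List.length hLR; simp at this; omega
      have hSS : tg₁ ++ R = l ++ tg₂ := hLR.symm
      have hsquad : IsSQuad (· < ·) G g₁ R g₂ l :=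
        ⟨hg₁, hg₂, tg₁, tg₂, hlm₁, hlm₂, hl0, by omega, by omega, by omega, hSS⟩
      have hDform : A₁ ++ (tg₁ ++ R) ++ B₂ = D := by
        rw [← hD₁, hB₁]
        simp [List.append_assoc]
      have hxy : Mw A₁ * g₁ * Mw B₁ - Mw A₂ * g₂ * Mw B₂
          = Mw A₁ * (g₁ * Mw R - Mw l * g₂) * Mw B₂ := by
        rw [hA₂, hB₁]
        simp only [← Mw_mul]
        noncomm_ring
      have hspb := spoly_bound hlm₁ hlm₂ hc₁ hc₂ hSS
      by_cases hcl : ∀ tf, IsLM (· < ·) g₁ tf → ∀ g' ∈ G, ∀ tg', IsLM (· < ·) g' tg' →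
          ¬ Submono tg' (((tf ++ R).drop 1).dropLast)
      · -- clear S-quadruplet
        have hr := hred g₁ R g₂ l ⟨hsquad, hcl⟩
        rw [red0_iff_spanB hmonic] at hr
        rcases hr with h0 | ⟨w, hwlm, hwmem⟩
        · rw [hxy, h0, mul_zero, zero_mul]
          exact Submodule.zero_mem _
        · have hwlt : WLt (· < ·) w (tg₁ ++ R) := by
            have := hspb _ hwlm.1
            rwa [FreeMonoid.toList_ofList] at this
          rw [hxy]
          have h1 := spanB_sandwich hwmem A₁ B₂
          refine spanB_le_spanLt ?_ h1
          exact wlt_congr rfl hDform (wlt_append A₁ B₂ hwlt)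
      · -- unclear: insert a middle occurrence
        push_neg at hcl
        obtain ⟨tf, htf, g₃, hg₃, tg₃, hlm₃, hsub₃⟩ := hcl
        rw [isLM_unique htf hlm₁] at hsub₃
        obtain ⟨l₃, r₃, hint⟩ := hsub₃
        -- reconstruct S = tg₁ ++ R
        obtain ⟨a, T, hST⟩ : ∃ a T, tg₁ ++ R = a :: T := by
          cases hS : tg₁ ++ R with
          | nil =>
            exfalso
            have h0 := congrArg List.length hS
            rw [List.length_append] at h0
            simp only [List.length_nil] at h0
            omega
          | cons a T => exact ⟨a, T, rfl⟩
        have hTne : T ≠ [] := by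
          intro h0
          have := congrArg List.length hST
          simp [h0] at this
          omega
        have hdrop : (tg₁ ++ R).drop 1 = T := by rw [hST]; rfl
        rw [hdrop] at hint
        have hTz := List.dropLast_append_getLast hTne
        set z := T.getLast hTne with hz
        have hSdecomp : tg₁ ++ R = (a :: l₃) ++ tg₃ ++ (r₃ ++ [z]) := by
          rw [hST, ← hTz, hint]
          simp [List.append_assoc]
        have hlenS : tg₁.length + R.length = (1 + l₃.length) + tg₃.length + (r₃.length + 1) := by
          have := congrArg List.length hSdecomp; simp at this; omega
        -- tg₃ is not an initial-segment-contained occurrence in tg₁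
        have hclaim1 : ¬ (1 + l₃.length + tg₃.length ≤ tg₁.length) := by
          intro hcc
          have hseq : (a :: l₃) ++ (tg₃ ++ (r₃ ++ [z])) = tg₁ ++ R := by
            rw [hSdecomp]; simp [List.append_assoc]
          obtain ⟨m₁, htg₁m, hm₁⟩ := append_surgery hseq (by simp; omega)
          have hm₁len : tg₃.length ≤ m₁.length := by
            have := congrArg List.length htg₁m; simp at this; omega
          obtain ⟨m₂, hm₁₂, _⟩ := append_surgery hm₁ hm₁len
          have hsub : Submono tg₃ tg₁ := ⟨a :: l₃, m₂, by rw [htg₁m, hm₁₂, List.append_assoc]⟩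
          by_cases hgeq : g₃ = g₁
          · subst hgeq
            have hteq : tg₃ = tg₁ := isLM_unique hlm₃ hlm₁
            have e0 : tg₃.length = tg₁.length := by rw [hteq]
            have e1 := congrArg List.length htg₁m
            simp only [List.length_append, List.length_cons] at e1
            have e2 := congrArg List.length hm₁₂
            simp only [List.length_append] at e2
            omega
          · exact absurd hsub (hirr g₁ hg₁ g₃ hg₃ hgeq tg₁ tg₃ hlm₁ hlm₃)
        -- tg₃ is not contained in tg₂
        have hclaim2 : 1 + l₃.length < l.length := by
          by_contra hcc
          push_neg at hcc
          have hseq : l ++ tg₂ = (a :: l₃) ++ (tg₃ ++ (r₃ ++ [z])) := by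
            rw [← hSS, hSdecomp]
            simp [List.append_assoc]
          obtain ⟨m, hal₃, htg₂m⟩ := append_surgery hseq (by simp; omega)
          have hsub : Submono tg₃ tg₂ := ⟨m, r₃ ++ [z], by rw [htg₂m, List.append_assoc]⟩
          by_cases hgeq : g₃ = g₂
          · subst hgeq
            have hteq : tg₃ = tg₂ := isLM_unique hlm₃ hlm₂
            have := congrArg List.length htg₂m
            simp [← hteq] at this
            omega
          · exact absurd hsub (hirr g₂ hg₂ g₃ hg₃ hgeq tg₂ tg₃ hlm₂ hlm₃)
        -- the middle term
        have hD₃ : (A₁ ++ (a :: l₃)) ++ tg₃ ++ ((r₃ ++ [z]) ++ B₂) = D := by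
          rw [← hDform, hSdecomp]
          simp [List.append_assoc]
        have hxz : Mw A₁ * g₁ * Mw B₁ - Mw A₂ * g₂ * Mw B₂
            = (Mw A₁ * g₁ * Mw B₁ - Mw (A₁ ++ (a :: l₃)) * g₃ * Mw ((r₃ ++ [z]) ++ B₂))
              + (Mw (A₁ ++ (a :: l₃)) * g₃ * Mw ((r₃ ++ [z]) ++ B₂)
                  - Mw A₂ * g₂ * Mw B₂) := by
          rw [sub_add_sub_cancel]
        -- span bookkeeping
        have hspan0 : tg₁.length + R.length ≤ s := by
          have hB₁len : B₁.length = R.length + B₂.length := by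
            have := congrArg List.length hB₁; simp at this; omega
          omega
        have hs1 : s - 1 < s := by omega
        rw [hxz]
        apply Submodule.add_mem
        · refine IH (s - 1) hs1 D A₁ B₁ (A₁ ++ (a :: l₃)) ((r₃ ++ [z]) ++ B₂) g₁ g₃ tg₁ tg₃
            hg₁ hg₃ hlm₁ hlm₃ hD₁ hD₃ ?_
          have hB₁len : B₁.length = R.length + B₂.length := by
            have := congrArg List.length hB₁; simp at this; omega
          simp only [List.length_append, List.length_cons]
          omega
        · refine IH (s - 1) hs1 D (A₁ ++ (a :: l₃)) ((r₃ ++ [z]) ++ B₂) A₂ B₂ g₃ g₂ tg₃ tg₂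
            hg₃ hg₂ hlm₃ hlm₂ hD₃ hD₂ ?_
          simp only [List.length_append, List.length_cons]
          omega

end St18
/-! ### Stage 9: the main backward lemma -/
namespace St18

open MonoidAlgebra Finsupp

variable {α : Type*} [LinearOrder α] [Fintype α] {K : Type*} [Field K]
variable {G : Set (MonoidAlgebra K (FreeMonoid α))}

theorem fin_exists_max {k : ℕ} (f : Fin k → List α) (hk : 0 < k) :
    ∃ j, ∀ i, WLe (· < ·) (f i) (f j) := by
  obtain ⟨j, -, hmax⟩ := Finset.exists_max_image Finset.univ (fun i => wval (f i))
    ⟨⟨0, hk⟩, Finset.mem_univ _⟩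
  refine ⟨j, fun i => ?_⟩
  by_cases he : f i = f j
  · exact Or.inr he
  · rcases wlt_trichot he with h | h
    · exact Or.inl h
    · exact absurd (hmax i (Finset.mem_univ i)) (not_le.2 (wval_mono h))

theorem spanLt_to_spanB {D : List α} {h : MonoidAlgebra K (FreeMonoid α)}
    (hh : h ∈ SpanLt G D) (hne : h ≠ 0) : ∃ D', WLt (· < ·) D' D ∧ h ∈ SpanB G D' := by
  rw [SpanLt, Submodule.mem_span_set'] at hh
  obtain ⟨k, c, v, hsum⟩ := hh
  choose A B g tg hg hlm heqx hb using fun i => (v i).2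
  have hk : 0 < k := by
    rcases Nat.eq_zero_or_pos k with h0 | h0
    · exfalso
      apply hne
      rw [← hsum]
      subst h0
      simp
    · exact h0
  obtain ⟨j, hj⟩ := fin_exists_max (fun i => A i ++ tg i ++ B i) hk
  refine ⟨A j ++ tg j ++ B j, hb j, ?_⟩
  rw [← hsum]
  apply Submodule.sum_mem
  intro i _
  apply Submodule.smul_mem
  apply Submodule.subset_span
  exact ⟨A i, B i, g i, tg i, hg i, hlm i, heqx i, hj i⟩

theorem main_outer
    (hmonic : ∀ g ∈ G, ∃ tg, IsLM (· < ·) g tg ∧ g.coeff (FreeMonoid.ofList tg) = 1)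
    (hirr : ∀ g ∈ G, ∀ g' ∈ G, g' ≠ g → ∀ tg tg',
      IsLM (· < ·) g tg → IsLM (· < ·) g' tg' → ¬ Submono tg' tg)
    (hred : ∀ (f : MonoidAlgebra K (FreeMonoid α)) (R : List α)
        (g : MonoidAlgebra K (FreeMonoid α)) (L : List α),
      IsClearSQuad (· < ·) G f R g L → Red0 (· < ·) G (f * Mw R - Mw L * g)) :
    ∀ (n : ℕ) (D : List α), wval D ≤ n → ∀ h ∈ SpanB G D, h ≠ 0 →
      ∃ th, IsLM (· < ·) h th ∧ ∃ g ∈ G, ∃ tg, IsLM (· < ·) g tg ∧ Submono tg th := by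
  intro n
  induction n using Nat.strong_induction_on with
  | _ n IHn =>
  intro D hD h hmem hne
  have inner : ∀ (k : ℕ) (cc : Fin k → K) (A B : Fin k → List α)
      (g : Fin k → MonoidAlgebra K (FreeMonoid α)) (tg : Fin k → List α),
      (∀ i, g i ∈ G) → (∀ i, IsLM (· < ·) (g i) (tg i)) →
      (∀ i, WLe (· < ·) (A i ++ tg i ++ B i) D) →
      ∀ h₀ ∈ SpanLt G D, ∀ h' : MonoidAlgebra K (FreeMonoid α), h' ≠ 0 →
      h' = h₀ + ∑ i, cc i • (Mw (A i) * g i * Mw (B i)) →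
      ∃ th, IsLM (· < ·) h' th ∧ ∃ g' ∈ G, ∃ tg', IsLM (· < ·) g' tg' ∧ Submono tg' th := by
    intro k
    induction k with
    | zero =>
      intro cc A B g tg hg hlm hb h₀ hh₀ h' hne' heq
      have he : h' = h₀ := by simpa using heq
      subst he
      obtain ⟨D', hlt, hmem'⟩ := spanLt_to_spanB hh₀ hne'
      exact IHn (wval D') (lt_of_lt_of_le (wval_mono hlt) hD) D' le_rfl h' hmem' hne'
    | succ k IHk =>
      intro cc A B g tg hg hlm hb h₀ hh₀ h' hne' heq
      have hsplit : (∑ i, cc i • (Mw (A i) * g i * Mw (B i)))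
          = (∑ i : Fin k, cc i.castSucc •
              (Mw (A i.castSucc) * g i.castSucc * Mw (B i.castSucc)))
            + cc (Fin.last k) • (Mw (A (Fin.last k)) * g (Fin.last k) * Mw (B (Fin.last k))) :=
        Fin.sum_univ_castSucc _
      rcases hb (Fin.last k) with hlt | heqD
      · -- strict leader: absorb the last term into h₀
        have hterm : Mw (A (Fin.last k)) * g (Fin.last k) * Mw (B (Fin.last k)) ∈ SpanLt G D :=
          Submodule.subset_span ⟨A _, B _, g _, tg _, hg _, hlm _, rfl, hlt⟩
        refine IHk (fun i => cc i.castSucc) (fun i => A i.castSucc) (fun i => B i.castSucc)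
          (fun i => g i.castSucc) (fun i => tg i.castSucc)
          (fun i => hg _) (fun i => hlm _) (fun i => hb _)
          (h₀ + cc (Fin.last k) • (Mw (A (Fin.last k)) * g (Fin.last k) * Mw (B (Fin.last k))))
          (Submodule.add_mem _ hh₀ (Submodule.smul_mem _ _ hterm)) h' hne' ?_
        rw [heq, hsplit]
        abel
      · by_cases hex : ∃ j : Fin k,
            A j.castSucc ++ tg j.castSucc ++ B j.castSucc = D
        · -- merge the last top term into another top term
          obtain ⟨j, hj⟩ := hex
          set xl := Mw (A (Fin.last k)) * g (Fin.last k) * Mw (B (Fin.last k)) with hxl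
          set y := Mw (A j.castSucc) * g j.castSucc * Mw (B j.castSucc) with hy
          have hres : xl - y ∈ SpanLt G D := by
            refine res hmonic hirr hred D.length D (A (Fin.last k)) (B (Fin.last k))
              (A j.castSucc) (B j.castSucc) (g (Fin.last k)) (g j.castSucc)
              (tg (Fin.last k)) (tg j.castSucc) (hg _) (hg _) (hlm _) (hlm _) heqD hj ?_
            omega
          set cc' : Fin k → K := Function.update (fun i : Fin k => cc i.castSucc) j
            (cc j.castSucc + cc (Fin.last k)) with hcc'
          have hsum' : (∑ i : Fin k, cc' i •
              (Mw (A i.castSucc) * g i.castSucc * Mw (B i.castSucc)))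
              = (∑ i : Fin k, cc i.castSucc •
                  (Mw (A i.castSucc) * g i.castSucc * Mw (B i.castSucc)))
                + cc (Fin.last k) • y := by
            classical
            have hpt : ∀ i : Fin k, cc' i •
                (Mw (A i.castSucc) * g i.castSucc * Mw (B i.castSucc))
                = Function.update
                    (fun i : Fin k => cc i.castSucc •
                      (Mw (A i.castSucc) * g i.castSucc * Mw (B i.castSucc))) j
                    ((cc j.castSucc + cc (Fin.last k)) • y) i := by
              intro i
              by_cases hij : i = j
              · subst hij
                simp [hcc', Function.update_self, hy]
              · simp [hcc', Function.update_of_ne hij]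
            rw [Finset.sum_congr rfl (fun i _ => hpt i)]
            rw [Finset.sum_update_of_mem (Finset.mem_univ j)]
            rw [← Finset.sum_erase_add _ _ (Finset.mem_univ j)]
            rw [add_smul, hy]
            simp only [Finset.sdiff_singleton_eq_erase]
            abel
          refine IHk cc' (fun i => A i.castSucc) (fun i => B i.castSucc)
            (fun i => g i.castSucc) (fun i => tg i.castSucc)
            (fun i => hg _) (fun i => hlm _) (fun i => hb _)
            (h₀ + cc (Fin.last k) • (xl - y))
            (Submodule.add_mem _ hh₀ (Submodule.smul_mem _ _ hres)) h' hne' ?_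
          rw [hsum', heq, hsplit, smul_sub]
          abel
        · -- the last term is the unique top term
          push_neg at hex
          have hLt : h₀ + (∑ i : Fin k, cc i.castSucc •
              (Mw (A i.castSucc) * g i.castSucc * Mw (B i.castSucc))) ∈ SpanLt G D := by
            apply Submodule.add_mem _ hh₀
            apply Submodule.sum_mem
            intro i _
            apply Submodule.smul_mem
            apply Submodule.subset_span
            refine ⟨A _, B _, g _, tg _, hg _, hlm _, rfl, ?_⟩
            rcases hb i.castSucc with h1 | h1
            · exact h1
            · exact absurd h1 (hex i)
          by_cases hc0 : cc (Fin.last k) = 0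
          · have he : h' = h₀ + ∑ i : Fin k, cc i.castSucc •
                (Mw (A i.castSucc) * g i.castSucc * Mw (B i.castSucc)) := by
              rw [heq, hsplit, hc0, zero_smul, add_zero]
            obtain ⟨D', hlt, hmem'⟩ := spanLt_to_spanB (he ▸ hLt) hne'
            exact IHn (wval D') (lt_of_lt_of_le (wval_mono hlt) hD) D' le_rfl h' hmem' hne'
          · -- conclude directly
            set xl := Mw (A (Fin.last k)) * g (Fin.last k) * Mw (B (Fin.last k)) with hxl
            have he : h' = (h₀ + ∑ i : Fin k, cc i.castSucc •
                (Mw (A i.castSucc) * g i.castSucc * Mw (B i.castSucc)))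
                + cc (Fin.last k) • xl := by
              rw [heq, hsplit]
              abel
            have hxlcoeff : xl.coeff (FreeMonoid.ofList D) = 1 := by
              obtain ⟨t', hlm', hc'⟩ := hmonic (g (Fin.last k)) (hg _)
              rw [isLM_unique hlm' (hlm (Fin.last k))] at hc'
              rw [hxl, ← heqD, ofList_sandwich, sandwich_apply, hc']
            have hcoeff : h'.coeff (FreeMonoid.ofList D) = cc (Fin.last k) := by
              rw [he, MonoidAlgebra.coeff_add, Finsupp.add_apply, MonoidAlgebra.coeff_smul_apply, hxlcoeff,
                spanLt_coeff_zero hLt, smul_eq_mul, mul_one, zero_add]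
            have hxlm : IsLM (· < ·) xl D := by
              have := isLM_sandwich (hlm (Fin.last k)) (A (Fin.last k)) (B (Fin.last k))
              rwa [heqD] at this
            have hbound : ∀ u ∈ h'.coeff.support, WLe (· < ·) (FreeMonoid.toList u) D := by
              intro u hu
              have : u ∈ (h₀ + ∑ i : Fin k, cc i.castSucc •
                  (Mw (A i.castSucc) * g i.castSucc * Mw (B i.castSucc))).coeff.support
                  ∨ u ∈ xl.coeff.support := by
                by_contra hcon
                push_neg at hcon
                have h1 := Finsupp.notMem_support_iff.1 hcon.1
                have h2 := Finsupp.notMem_support_iff.1 hcon.2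
                have : h'.coeff u = 0 := by
                  rw [he, MonoidAlgebra.coeff_add, Finsupp.add_apply, MonoidAlgebra.coeff_smul_apply, h1, h2, smul_zero, add_zero]
                exact (Finsupp.mem_support_iff.1 hu) this
              rcases this with h1 | h1
              · exact Or.inl (spanLt_support hLt u h1)
              · exact isLM_mem_wle hxlm h1
            have hlmh' : IsLM (· < ·) h' D :=
              isLM_of_bound (by rw [hcoeff]; exact hc0) hbound
            exact ⟨D, hlmh', g (Fin.last k), hg _, tg (Fin.last k), hlm _,
              ⟨A (Fin.last k), B (Fin.last k), heqD.symm⟩⟩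
  rw [SpanB, Submodule.mem_span_set'] at hmem
  obtain ⟨k, c, v, hsum⟩ := hmem
  choose A B g tg hg hlm heqx hb using fun i => (v i).2
  refine inner k c A B g tg hg hlm hb 0 (Submodule.zero_mem _) h hne ?_
  rw [zero_add, ← hsum]
  apply Finset.sum_congr rfl
  intro i _
  rw [← heqx i]

end St18

/-- For a set `G` of monic polynomials of degree `> 1` with pairwise
irreducible leading monomials, `G` is a Gröbner basis of the two-sided ideal it generates
iff every clear S-polynomial of `G` is reduced to zero by `G`. -/
theorem groebner_iff_clear_spolys_red_zero
    (α : Type*) [Fintype α] [LinearOrder α] (K : Type*) [Field K]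
    (G : Set (MonoidAlgebra K (FreeMonoid α)))
    (hmonic : ∀ g ∈ G, ∃ tg, IsLM (· < ·) g tg ∧ g.coeff (FreeMonoid.ofList tg) = 1)
    (hdeg : ∀ g ∈ G, ∀ tg, IsLM (· < ·) g tg → 1 < tg.length)
    (hirr : ∀ g ∈ G, ∀ g' ∈ G, g' ≠ g → ∀ tg tg',
      IsLM (· < ·) g tg → IsLM (· < ·) g' tg' → ¬ Submono tg' tg) :
    IsGroebnerBasis (· < ·) G (TwoSidedIdeal.span G) ↔
    (∀ (f : MonoidAlgebra K (FreeMonoid α)) (R : List α)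
        (g : MonoidAlgebra K (FreeMonoid α)) (L : List α),
      IsClearSQuad (· < ·) G f R g L → Red0 (· < ·) G (f * Mw R - Mw L * g)) := by
  constructor
  · intro hGB f R g L hclear
    obtain ⟨hsq, -⟩ := hclear
    exact St18.forward_dir hmonic hGB.2.2 f R g L hsq.1 hsq.2.1
  · intro hred
    refine ⟨fun g hg => TwoSidedIdeal.subset_span hg, rfl, ?_⟩
    intro h hmem hne
    obtain ⟨D, hD⟩ := (St18.mem_span_iff_bdd hmonic).1 hmem
    exact St18.main_outer hmonic hirr hred (St18.wval D) D le_rfl h hD hne
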